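/- arXiv:1711.02292 — 7 statements merged into one kernel-verified Lean document; each statement's English description precedes it below -/
import Mathlib

section
/- For every subset D ⊆ F_q with |D| = n and every integer k with 0 < k < n, the covering radius of the Reed–Solomon code RS(D,k) equals n − k. -/
open Polynomial

/-- The error distance from a word `u` to a code `C`: the minimum Hamming
distance from `u` to a codeword of `C`. -/
noncomputable def errDist {ι F : Type*} [Fintype ι] [DecidableEq F]
    (u : ι → F) (C : Set (ι → F)) : ℕ :=
  sInf {d | ∃ c ∈ C, hammingDist u c = d}

/-- The covering radius of a code `C`: the maximum error distance of a word. -/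
noncomputable def covRad {ι F : Type*} [Fintype ι] [DecidableEq F]
    (C : Set (ι → F)) : ℕ :=
  sSup {d | ∃ u : ι → F, errDist u C = d}

/-- The Reed–Solomon code with evaluation set `D` and dimension `k`:
evaluations of polynomials of degree at most `k - 1` at the points of `D`. -/
def RS {F : Type*} [Field F] (D : Finset F) (k : ℕ) : Set (D → F) :=
  {w | ∃ f : F[X], f.degree < (k : ℕ) ∧ ∀ x : D, w x = f.eval (x : F)}

/-!
Interpolating a word at `min k n` points of `D` (Lagrange) gives a codeword of `RS(D, k)` at
distance at most `n - k` from it. Conversely, a codeword `f` agrees with the word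
`(x ^ k)_{x ∈ D}` only at roots of the degree-`k` polynomial `X ^ k - f`, hence at no more than
`k` points, so this word has error distance exactly `n - k`.
-/

open Finset

lemma hammingDist_eq_card_sub_card_filter_eq {ι β : Type*} [Fintype ι] [DecidableEq β]
    (u c : ι → β) : hammingDist u c = Fintype.card ι - #{i | u i = c i} := by
  have h := card_filter_add_card_filter_not (s := univ) fun i => u i = c i
  rw [card_univ] at h
  exact Nat.eq_sub_of_add_eq' h

section Covering

variable {ι F : Type*} [Fintype ι] [DecidableEq F] {C : Set (ι → F)} {u c : ι → F}

lemma errDist_le_hammingDist (hc : c ∈ C) : errDist u C ≤ hammingDist u c :=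
  Nat.sInf_le ⟨c, hc, rfl⟩

lemma le_errDist {d : ℕ} (hC : C.Nonempty) (h : ∀ c ∈ C, d ≤ hammingDist u c) :
    d ≤ errDist u C := by
  obtain ⟨c, hc⟩ := hC
  refine le_csInf ⟨_, c, hc, rfl⟩ ?_
  rintro _ ⟨c, hc, rfl⟩
  exact h c hc

lemma covRad_eq_of_forall_le {r : ℕ} (hle : ∀ u, errDist u C ≤ r) (u₀ : ι → F)
    (hu₀ : errDist u₀ C = r) : covRad C = r :=
  IsGreatest.csSup_eq ⟨⟨u₀, hu₀⟩, by rintro _ ⟨u, rfl⟩; exact hle u⟩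

end Covering

section ReedSolomon

variable {F : Type*} [Field F] {D : Finset F} {k : ℕ}

lemma zero_mem_RS : (0 : D → F) ∈ RS D k :=
  ⟨0, by simp, fun _ => by simp⟩

variable [DecidableEq F]

lemma exists_mem_RS_min_le_card_filter_eq (u : D → F) :
    ∃ c ∈ RS D k, min k #D ≤ #{x | u x = c x} := by
  obtain ⟨S, -, hS⟩ := exists_subset_card_eq (s := (univ : Finset D)) (n := min k #D) (by simp)
  have hinj : Set.InjOn ((↑) : D → F) S := Subtype.val_injective.injOn
  have hdeg : (Lagrange.interpolate S (↑) u).degree < k :=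
    (Lagrange.degree_interpolate_lt u hinj).trans_le (by exact_mod_cast hS ▸ min_le_left _ _)
  refine ⟨_, ⟨_, hdeg, fun _ => rfl⟩, hS ▸ card_le_card fun x hx => ?_⟩
  simpa using (Lagrange.eval_interpolate_at_node u hinj hx).symm

lemma card_filter_pow_eq_le {c : D → F} (hc : c ∈ RS D k) :
    #{x : D | (x : F) ^ k = c x} ≤ k := by
  obtain ⟨f, hdeg, hcf⟩ := hc
  have hXk : (X ^ k : F[X]).degree = k := degree_X_pow k
  have hg : (X ^ k - f).degree = ((k : ℕ) : WithBot ℕ) := by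
    rw [degree_sub_eq_left_of_degree_lt (hXk ▸ hdeg), hXk]
  have hg0 : X ^ k - f ≠ 0 := fun h => by simp [h] at hg
  calc #{x : D | (x : F) ^ k = c x}
      = #(({x : D | (x : F) ^ k = c x} : Finset D).map (Function.Embedding.subtype _)) :=
        (card_map _).symm
    _ ≤ (X ^ k - f).natDegree := by
        refine card_le_degree_of_subset_roots fun y hy => ?_
        obtain ⟨x, hx, rfl⟩ := mem_map.1 hy
        rw [mem_filter, hcf] at hx
        simp [mem_roots hg0, hx.2]
    _ = k := natDegree_eq_of_degree_eq_some hg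

lemma errDist_RS_le (u : D → F) : errDist u (RS D k) ≤ #D - k := by
  obtain ⟨c, hc, hagree⟩ := exists_mem_RS_min_le_card_filter_eq (k := k) u
  refine (errDist_le_hammingDist hc).trans ?_
  rw [hammingDist_eq_card_sub_card_filter_eq, Fintype.card_coe]
  omega

lemma le_errDist_pow_RS : #D - k ≤ errDist (fun x : D => (x : F) ^ k) (RS D k) := by
  refine le_errDist ⟨0, zero_mem_RS⟩ fun c hc => ?_
  have hagree := card_filter_pow_eq_le hc
  rw [hammingDist_eq_card_sub_card_filter_eq, Fintype.card_coe]
  omega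

end ReedSolomon

theorem stmt0_general {F : Type*} [Field F] [DecidableEq F]
    (D : Finset F) (k : ℕ) :
    covRad (RS D k) = D.card - k :=
  covRad_eq_of_forall_le errDist_RS_le _ ((errDist_RS_le _).antisymm le_errDist_pow_RS)

/-- The covering radius of `RS(D, k)` is `|D| - k`. -/
theorem stmt0 {F : Type*} [Field F] [Fintype F] [DecidableEq F]
    (D : Finset F) (k : ℕ) (hk : 0 < k) (hkn : k < D.card) :
    covRad (RS D k) = D.card - k :=
  stmt0_general D k
end

section
/- Let r ≥ 2 be an integer, let D ⊆ F_q with |D| = n ≥ r + 2 be r-zero-sum-free (no subset S ⊆ D with |S| = r satisfies Σ_{s∈S} s = 0), set k = n − r − 1, let g ∈ F_q[x] have degree at most k−1, and let f(x) = x^{k+1} − (Σ_{s∈D} s)·x^k + g(x). Then: (i) there exist no a ∈ F_q^* and polynomial h ∈ F_q[x] of degree at most k−1 such that f(x) = a·x^k + h(x) for all x ∈ D; and (ii) there exist no a ∈ F_q^*, δ ∈ F_q∖D, and polynomial h ∈ F_q[x] of degree at most k−1 such that f(x) = a/(x−δ) + h(x) for all x ∈ D. -/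
open Polynomial

/-- With `D` an `r`-zero-sum-free set, `k = |D| - r - 1`, and
`f(x) = x^(k+1) - (∑_{s ∈ D} s) x^k + g(x)` with `deg g ≤ k - 1`:
(i) `f` does not agree on `D` with any `a x^k + h(x)` with `a ≠ 0`, `deg h ≤ k - 1`;
(ii) `f` does not agree on `D` with any `a/(x - δ) + h(x)` with `a ≠ 0`, `δ ∉ D`,
`deg h ≤ k - 1`. -/
theorem stmt2 {F : Type*} [Field F] [Fintype F] [DecidableEq F]
    (r : ℕ) (hr : 2 ≤ r) (D : Finset F) (hD : r + 2 ≤ D.card)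
    (hzsf : ∀ S ⊆ D, S.card = r → ∑ s ∈ S, s ≠ 0)
    (k : ℕ) (hk : k = D.card - r - 1)
    (g : F[X]) (hg : g.degree < (k : ℕ)) :
    (¬ ∃ a : F, a ≠ 0 ∧ ∃ h : F[X], h.degree < (k : ℕ) ∧ ∀ x ∈ D,
        (X ^ (k + 1) - C (∑ s ∈ D, s) * X ^ k + g).eval x = a * x ^ k + h.eval x) ∧
    (¬ ∃ a : F, a ≠ 0 ∧ ∃ δ ∉ D, ∃ h : F[X], h.degree < (k : ℕ) ∧ ∀ x ∈ D,
        (X ^ (k + 1) - C (∑ s ∈ D, s) * X ^ k + g).eval x = a / (x - δ) + h.eval x) := by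
  have hkcard : k + r + 1 = D.card := by omega
  have hmain : (X ^ (k + 1) - C (∑ s ∈ D, s) * X ^ k : F[X]).natDegree ≤ k + 1 := by
    refine le_trans (natDegree_sub_le _ _) (max_le (by simp) ?_)
    exact le_trans (natDegree_C_mul_le _ _) (by simp)
  have hmainc : ∀ m, k + 1 ≤ m →
      (X ^ (k + 1) - C (∑ s ∈ D, s) * X ^ k : F[X]).coeff m =
        if m = k + 1 then 1 else 0 := by
    intro m hm
    simp only [coeff_sub, coeff_C_mul, coeff_X_pow]
    rw [if_neg (by omega : ¬ m = k)]
    by_cases hmk : m = k + 1 <;> simp [hmk]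
  constructor
  · rintro ⟨a, ha, h, hh, heq⟩
    set P : F[X] := X ^ (k + 1) - C (∑ s ∈ D, s) * X ^ k + g - (C a * X ^ k + h) with hP
    have hgnd : g.natDegree ≤ k := natDegree_le_iff_degree_le.2 hg.le
    have hhnd : h.natDegree ≤ k := natDegree_le_iff_degree_le.2 hh.le
    have hPd : P.natDegree ≤ k + 1 := by
      refine le_trans (natDegree_sub_le _ _) (max_le ?_ ?_)
      · exact le_trans (natDegree_add_le _ _) (max_le hmain (by omega))
      · refine le_trans (natDegree_add_le _ _) (max_le ?_ (by omega))
        exact le_trans (natDegree_C_mul_le _ _) (by simp)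
    have hP0 : P = 0 := by
      apply eq_zero_of_natDegree_lt_card_of_eval_eq_zero' P D
      · intro x hx
        simp only [hP, eval_sub, eval_add, eval_mul, eval_pow, eval_X, eval_C]
        have := heq x hx
        simp only [eval_add, eval_sub, eval_mul, eval_pow, eval_X, eval_C] at this
        linear_combination this
      · exact lt_of_le_of_lt hPd (by omega)
    have hc : P.coeff (k + 1) = 1 := by
      simp only [hP, coeff_sub, coeff_add, coeff_C_mul, coeff_X_pow]
      rw [coeff_eq_zero_of_natDegree_lt (by omega : g.natDegree < k + 1),
        coeff_eq_zero_of_natDegree_lt (by omega : h.natDegree < k + 1)]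
      rw [if_neg (by omega : ¬ k + 1 = k)]
      simp
    rw [hP0] at hc
    simp at hc
  · rintro ⟨a, ha, δ, hδ, h, hh, heq⟩
    set A : F[X] := X ^ (k + 1) - C (∑ s ∈ D, s) * X ^ k + g - h with hA
    set P : F[X] := (X - C δ) * A - C a with hP
    have hgnd : g.natDegree ≤ k := natDegree_le_iff_degree_le.2 hg.le
    have hhnd : h.natDegree ≤ k := natDegree_le_iff_degree_le.2 hh.le
    have hAd : A.natDegree ≤ k + 1 := by
      refine le_trans (natDegree_sub_le _ _) (max_le ?_ (by omega))
      exact le_trans (natDegree_add_le _ _) (max_le hmain (by omega))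
    have hPd : P.natDegree ≤ k + 2 := by
      refine le_trans (natDegree_sub_le _ _) (max_le ?_ (by simp))
      refine le_trans natDegree_mul_le ?_
      have hX : (X - C δ : F[X]).natDegree ≤ 1 :=
        le_trans (natDegree_sub_le _ _) (by simp)
      omega
    have hAc : A.coeff (k + 1) = 1 := by
      rw [hA, coeff_sub, coeff_add, hmainc (k + 1) le_rfl,
        coeff_eq_zero_of_natDegree_lt (by omega : g.natDegree < k + 1),
        coeff_eq_zero_of_natDegree_lt (by omega : h.natDegree < k + 1)]
      simp
    have hP0 : P = 0 := by
      apply eq_zero_of_natDegree_lt_card_of_eval_eq_zero' P D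
      · intro x hx
        have hxδ : x - δ ≠ 0 := sub_ne_zero.2 (fun hxd => hδ (hxd ▸ hx))
        have := heq x hx
        simp only [eval_add, eval_sub, eval_mul, eval_pow, eval_X, eval_C] at this ⊢
        simp only [hP, hA, eval_sub, eval_mul, eval_add, eval_pow, eval_X, eval_C]
        field_simp at this ⊢
        linear_combination this
      · exact lt_of_le_of_lt hPd (by omega)
    have hc : P.coeff (k + 2) = 1 := by
      simp only [hP, coeff_sub, sub_mul, coeff_X_mul, coeff_C_mul, coeff_C]
      rw [hAc, coeff_eq_zero_of_natDegree_lt (by omega : A.natDegree < k + 2),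
        if_neg (by omega : ¬ k + 2 = 0)]
      ring
    rw [hP0] at hc
    simp at hc
end

section
/- Let q be a prime power and let k be an integer with 2 ≤ k ≤ q−2 if q is odd, and 3 ≤ k ≤ q−3 if q is even. Assume that the covering radius of PRS(q+1,k) equals q−k. Let p(x) ∈ F_q[x] be a monic irreducible quadratic polynomial and let (a,b) ∈ F_q²∖{(0,0)}. Then the word w = ((a+bα_1)/p(α_1), …, (a+bα_q)/p(α_q), 0) satisfies d(w, PRS(q+1,k)) = q−k, and for every codeword c ∈ PRS(q+1,k) the word w + c also satisfies d(w+c, PRS(q+1,k)) = q−k; i.e., the whole coset w + PRS(q+1,k) consists of deep holes of PRS(q+1,k). -/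
open Polynomial

/-- The projective Reed–Solomon code of length `q + 1` and dimension `k`. -/
def PRS (F : Type*) [Field F] (k : ℕ) : Set (Option F → F) :=
  {w | ∃ f : F[X], f.degree < (k : ℕ) ∧ (∀ x : F, w (some x) = f.eval x) ∧
    w none = f.coeff (k - 1)}

lemma my_no_root {F : Type*} [Field F] (p : F[X]) (hirr : Irreducible p)
    (hdeg : p.natDegree = 2) (x : F) : p.eval x ≠ 0 := by
  intro h
  obtain ⟨q, hq⟩ := Polynomial.dvd_iff_isRoot.2 h
  have hp0 : p ≠ 0 := hirr.ne_zero
  rcases hirr.isUnit_or_isUnit hq with hu | hu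
  · exact Polynomial.not_isUnit_X_sub_C x hu
  · have hq0 : q ≠ 0 := by
      rintro rfl; rw [mul_zero] at hq; exact hp0 hq
    have h0 := Polynomial.natDegree_eq_zero_of_isUnit hu
    have : p.natDegree = 1 := by
      rw [hq, Polynomial.natDegree_mul (Polynomial.X_sub_C_ne_zero x) hq0,
        Polynomial.natDegree_X_sub_C, h0]
    omega

lemma my_hd_add {ι β : Type*} [Fintype ι] [DecidableEq β] [AddGroup β] (x y c : ι → β) :
    hammingDist (x + c) (y + c) = hammingDist x y := by
  simp [hammingDist, Pi.add_apply, add_left_inj]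

lemma PRS_sub {F : Type*} [Field F] (k : ℕ) {c c' : Option F → F}
    (h : c ∈ PRS F k) (h' : c' ∈ PRS F k) : c - c' ∈ PRS F k := by
  obtain ⟨f, h1, h2, h3⟩ := h
  obtain ⟨f', h1', h2', h3'⟩ := h'
  exact ⟨f - f', lt_of_le_of_lt (Polynomial.degree_sub_le f f') (max_lt h1 h1'),
    fun x => by simp [h2 x, h2' x], by simp [h3, h3']⟩

lemma PRS_add {F : Type*} [Field F] (k : ℕ) {c c' : Option F → F}
    (h : c ∈ PRS F k) (h' : c' ∈ PRS F k) : c + c' ∈ PRS F k := by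
  obtain ⟨f, h1, h2, h3⟩ := h
  obtain ⟨f', h1', h2', h3'⟩ := h'
  exact ⟨f + f', lt_of_le_of_lt (Polynomial.degree_add_le f f') (max_lt h1 h1'),
    fun x => by simp [h2 x, h2' x], by simp [h3, h3']⟩

lemma PRS_zero {F : Type*} [Field F] [Fintype F] (k : ℕ) : (0 : Option F → F) ∈ PRS F k :=
  ⟨0, by rw [Polynomial.degree_zero]; exact WithBot.bot_lt_coe (k : ℕ), fun x => by simp, by simp⟩

lemma PRS_dist_bound {F : Type*} [Field F] [Fintype F] [DecidableEq F]
    (k : ℕ) (hk1 : 1 ≤ k)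
    (p : F[X]) (hirr : Irreducible p) (hdeg : p.natDegree = 2)
    (a b : F) (hab : ¬(a = 0 ∧ b = 0))
    (c : Option F → F) (hc : c ∈ PRS F k) :
    Fintype.card F - k ≤
      hammingDist (fun i : Option F => i.elim 0 fun x => (a + b * x) / p.eval x) c := by
  obtain ⟨f, hfdeg, hfs, hfn⟩ := hc
  set w : Option F → F := fun i => i.elim 0 fun x => (a + b * x) / p.eval x with hw
  have hpne := my_no_root p hirr hdeg
  set l : F[X] := C b * X + C a with hl
  have hldeg : l.natDegree ≤ 1 := Polynomial.natDegree_linear_le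
  have hlne : l ≠ 0 := by
    intro h; apply hab
    constructor
    · have := congrArg (fun q => Polynomial.coeff q 0) h; simpa [hl] using this
    · have := congrArg (fun q => Polynomial.coeff q 1) h; simpa [hl] using this
  set g : F[X] := f * p - l with hg
  have hp0 : p ≠ 0 := hirr.ne_zero
  have hroot : ∀ x : F, w (some x) = c (some x) → g.eval x = 0 := by
    intro x hx
    have hx' : (a + b * x) / p.eval x = f.eval x := by
      rw [hw] at hx; simpa [hfs x] using hx
    have hxx := (div_eq_iff (hpne x)).1 hx'
    simp only [hg, hl, Polynomial.eval_sub, Polynomial.eval_mul, Polynomial.eval_add,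
      Polynomial.eval_C, Polynomial.eval_X]
    linear_combination -hxx
  set AF : Finset F := Finset.univ.filter (fun x : F => w (some x) = c (some x)) with hAFdef
  have hAF : ∀ _ : g ≠ 0, AF.card ≤ g.natDegree := fun hgne => by
    calc AF.card ≤ g.roots.toFinset.card := Finset.card_le_card (by
            intro x hx
            rw [Multiset.mem_toFinset, Polynomial.mem_roots hgne]
            exact hroot x (Finset.mem_filter.1 hx).2)
      _ ≤ Multiset.card g.roots := g.roots.toFinset_card_le
      _ ≤ g.natDegree := Polynomial.card_roots' g
  set A : Finset (Option F) := Finset.univ.filter (fun i : Option F => w i = c i) with hAdef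
  have hmul2 : (f * p).natDegree ≤ f.natDegree + 2 := by
    have := Polynomial.natDegree_mul_le (p := f) (q := p)
    omega
  have hAk : A.card ≤ k + 1 := by
    by_cases hc0 : f.coeff (k - 1) = 0
    · have hsub : A ⊆ insert none (AF.map ⟨some, Option.some_injective F⟩) := by
        intro i hi
        rcases i with _ | x
        · exact Finset.mem_insert_self _ _
        · exact Finset.mem_insert_of_mem (Finset.mem_map.2
            ⟨x, Finset.mem_filter.2 ⟨Finset.mem_univ x, (Finset.mem_filter.1 hi).2⟩, rfl⟩)
      have hkey : AF.card ≤ k := by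
        by_cases hf0 : f = 0
        · have hgeq : g = -l := by rw [hg, hf0, zero_mul, zero_sub]
          have hgne : g ≠ 0 := by rw [hgeq]; simpa using hlne
          have hgd : g.natDegree ≤ k := by
            rw [hgeq, Polynomial.natDegree_neg]; omega
          exact le_trans (hAF hgne) hgd
        · have h1 : f.natDegree < k := (Polynomial.natDegree_lt_iff_degree_lt hf0).2 hfdeg
          have h2 : f.natDegree ≠ k - 1 := by
            intro h
            apply hf0
            apply Polynomial.leadingCoeff_eq_zero.1
            rw [Polynomial.leadingCoeff, h]; exact hc0
          have hmuldeg : (f * p).natDegree = f.natDegree + 2 := by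
            rw [Polynomial.natDegree_mul hf0 hp0, hdeg]
          have hgne : g ≠ 0 := by
            intro h
            have h2 : f * p = l := by rwa [hg, sub_eq_zero] at h
            rw [h2] at hmuldeg; omega
          have hgd : g.natDegree ≤ k := by
            have := Polynomial.natDegree_sub_le (f * p) l
            rw [hg]; omega
          exact le_trans (hAF hgne) hgd
      calc A.card ≤ (insert none (AF.map ⟨some, Option.some_injective F⟩)).card :=
            Finset.card_le_card hsub
        _ ≤ (AF.map ⟨some, Option.some_injective F⟩).card + 1 := Finset.card_insert_le _ _
        _ = AF.card + 1 := by rw [Finset.card_map]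
        _ ≤ k + 1 := by omega
    · have hf0 : f ≠ 0 := fun h => hc0 (by simp [h])
      have h1 : f.natDegree < k := (Polynomial.natDegree_lt_iff_degree_lt hf0).2 hfdeg
      have h2 : k - 1 ≤ f.natDegree := Polynomial.le_natDegree_of_ne_zero hc0
      have hmuldeg : (f * p).natDegree = f.natDegree + 2 := by
        rw [Polynomial.natDegree_mul hf0 hp0, hdeg]
      have hgne : g ≠ 0 := by
        intro h
        have h3 : f * p = l := by rwa [hg, sub_eq_zero] at h
        rw [h3] at hmuldeg; omega
      have hgd : g.natDegree ≤ k + 1 := by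
        have := Polynomial.natDegree_sub_le (f * p) l
        rw [hg]; omega
      have hnone : none ∉ A := by
        rw [hAdef, Finset.mem_filter]
        rintro ⟨-, h⟩
        rw [hw] at h
        simp only [Option.elim] at h
        rw [hfn] at h
        exact hc0 h.symm
      have hsub : A ⊆ AF.map ⟨some, Option.some_injective F⟩ := by
        intro i hi
        rcases i with _ | x
        · exact absurd hi hnone
        · exact Finset.mem_map.2
            ⟨x, Finset.mem_filter.2 ⟨Finset.mem_univ x, (Finset.mem_filter.1 hi).2⟩, rfl⟩
      calc A.card ≤ (AF.map ⟨some, Option.some_injective F⟩).card := Finset.card_le_card hsub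
        _ = AF.card := Finset.card_map _
        _ ≤ k + 1 := le_trans (hAF hgne) hgd
  have hsum : A.card + hammingDist w c = Fintype.card (Option F) := by
    have h1 : hammingDist w c = (Finset.univ.filter (fun i : Option F => ¬ (w i = c i))).card := by
      simp only [hammingDist, ne_eq]
    rw [h1, hAdef, Finset.card_filter_add_card_filter_not, Finset.card_univ]
  rw [Fintype.card_option] at hsum
  omega

/-- Deep holes of `PRS(q+1,k)` constructed from a monic irreducible quadratic
polynomial `p`: the word `w = ((a+bα)/p(α))_{α ∈ F_q} ⌢ (0)` and every element of the
coset `w + PRS(q+1,k)` has error distance `q - k` to `PRS(q+1,k)`. -/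
theorem stmt4 {F : Type*} [Field F] [Fintype F] [DecidableEq F]
    (k : ℕ)
    (hodd : Odd (Fintype.card F) → 2 ≤ k ∧ k ≤ Fintype.card F - 2)
    (heven : Even (Fintype.card F) → 3 ≤ k ∧ k ≤ Fintype.card F - 3)
    (hcov : covRad (PRS F k) = Fintype.card F - k)
    (p : F[X]) (hmonic : p.Monic) (hirr : Irreducible p) (hdeg : p.natDegree = 2)
    (a b : F) (hab : (a, b) ≠ (0, 0)) :
    errDist (fun i : Option F => i.elim 0 (fun x => (a + b * x) / p.eval x))
        (PRS F k) = Fintype.card F - k ∧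
    ∀ c ∈ PRS F k,
      errDist ((fun i : Option F => i.elim 0 (fun x => (a + b * x) / p.eval x)) + c)
        (PRS F k) = Fintype.card F - k := by
  set w : Option F → F := fun i : Option F => i.elim 0 (fun x => (a + b * x) / p.eval x)
    with hw
  have hk1 : 1 ≤ k := by
    rcases Nat.even_or_odd (Fintype.card F) with he | ho
    · have := heven he; omega
    · have := hodd ho; omega
  have hab' : ¬(a = 0 ∧ b = 0) := by
    rintro ⟨rfl, rfl⟩; exact hab rfl
  have hbound : ∀ c ∈ PRS F k, Fintype.card F - k ≤ hammingDist w c :=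
    fun c hc => PRS_dist_bound k hk1 p hirr hdeg a b hab' c hc
  have hS : Set.Nonempty {d | ∃ c ∈ PRS F k, hammingDist w c = d} :=
    ⟨_, 0, PRS_zero k, rfl⟩
  have hge : Fintype.card F - k ≤ errDist w (PRS F k) := by
    obtain ⟨c0, hc0, hc0eq⟩ := Nat.sInf_mem hS
    rw [errDist, ← hc0eq]
    exact hbound c0 hc0
  have hbdd : BddAbove {d | ∃ u : Option F → F, errDist u (PRS F k) = d} := by
    refine ⟨Fintype.card (Option F), ?_⟩
    rintro d ⟨u, rfl⟩
    have h1 : errDist u (PRS F k) ≤ hammingDist u 0 :=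
      Nat.sInf_le ⟨0, PRS_zero k, rfl⟩
    exact le_trans h1 hammingDist_le_card_fintype
  have hle : errDist w (PRS F k) ≤ Fintype.card F - k := by
    rw [← hcov]
    exact le_csSup hbdd ⟨w, rfl⟩
  have part1 : errDist w (PRS F k) = Fintype.card F - k := le_antisymm hle hge
  refine ⟨part1, fun c hc => ?_⟩
  have hset : {d | ∃ c' ∈ PRS F k, hammingDist (w + c) c' = d}
      = {d | ∃ c' ∈ PRS F k, hammingDist w c' = d} := by
    ext d
    constructor
    · rintro ⟨c', hc', rfl⟩
      refine ⟨c' - c, PRS_sub k hc' hc, ?_⟩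
      rw [← my_hd_add w (c' - c) c, sub_add_cancel]
    · rintro ⟨c', hc', rfl⟩
      exact ⟨c' + c, PRS_add k hc' hc, my_hd_add w c' c⟩
  have heq : errDist (w + c) (PRS F k) = errDist w (PRS F k) := congrArg sInf hset
  rw [heq]; exact part1
end

section
/- Let q ≥ 5 be an odd prime power. For every polynomial g ∈ F_q[x] of degree exactly q−2, there exist a monic irreducible quadratic polynomial p(x) ∈ F_q[x], a pair (a,b) ∈ F_q²∖{(0,0)}, and a polynomial h ∈ F_q[x] of degree at most q−4 such that g(x) = (a+bx)/p(x) + h(x) for all x ∈ F_q. -/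
/-!
Let `β` be the leading coefficient of `g` and pick `c` with `g.coeff (q - 3) = -c β`. Since `q` is
odd there is `d` making `p = X² + cX + d` irreducible. Frobenius swaps the two roots of `p`, whose
sum is `-c`, so `p ∣ X^q + X + c`; the quotient `Q` is monic of degree `q - 2` with next
coefficient `-c`, and for `x ∈ F` we get `p(x) Q(x) = x^q + x + c = 2x + c`. Thus
`β Q(x) = (cβ + 2βx) / p(x)`, while `h = g - βQ` has its two top coefficients cancelled.
-/

open Polynomial

theorem eval_ne_zero_of_irreducible {K : Type*} [Field K] {p : K[X]} (hp : Irreducible p)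
    (hdeg : p.natDegree ≠ 1) (x : K) : p.eval x ≠ 0 := fun hx =>
  hdeg (natDegree_eq_of_degree_eq_some (degree_eq_one_of_irreducible_of_root hp hx))

section Quadratic

variable {F : Type*} [Field F]

theorem natDegree_X_sq_add_C_mul_X_add_C (c d : F) :
    (X ^ 2 + C c * X + C d : F[X]).natDegree = 2 := by
  compute_degree!

theorem monic_X_sq_add_C_mul_X_add_C (c d : F) : (X ^ 2 + C c * X + C d : F[X]).Monic := by
  monicity!

theorem nextCoeff_X_sq_add_C_mul_X_add_C (c d : F) :
    (X ^ 2 + C c * X + C d : F[X]).nextCoeff = c := by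
  rw [nextCoeff_of_natDegree_pos (by rw [natDegree_X_sq_add_C_mul_X_add_C]; decide),
    natDegree_X_sq_add_C_mul_X_add_C]
  simp

theorem irreducible_X_sq_add_C_mul_X_add_C_of_not_isSquare_discrim {c d : F}
    (h : ¬IsSquare (discrim 1 c d)) : Irreducible (X ^ 2 + C c * X + C d : F[X]) := by
  refine irreducible_of_degree_le_three_of_not_isRoot
    (by rw [natDegree_X_sq_add_C_mul_X_add_C]; decide) fun x hx => ?_
  refine quadratic_ne_zero_of_discrim_ne_sq (fun s hs => h ⟨s, by rw [hs, sq]⟩) x ?_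
  simpa [sq] using hx

theorem exists_irreducible_X_sq_add_C_mul_X_add_C [Finite F] (hF : ringChar F ≠ 2) (c : F) :
    ∃ d : F, Irreducible (X ^ 2 + C c * X + C d : F[X]) := by
  cases nonempty_fintype F
  obtain ⟨u, hu⟩ := FiniteField.exists_nonsquare hF
  have h4 : (4 : F) ≠ 0 := by
    have h2 := Ring.two_ne_zero hF
    rw [show (4 : F) = 2 * 2 by norm_num]
    exact mul_ne_zero h2 h2
  refine ⟨(c ^ 2 - u) / 4, irreducible_X_sq_add_C_mul_X_add_C_of_not_isSquare_discrim ?_⟩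
  convert hu using 2
  rw [discrim]
  field_simp
  ring

variable [Fintype F]

theorem X_sq_add_C_mul_X_add_C_dvd {c d : F} (hp : Irreducible (X ^ 2 + C c * X + C d : F[X])) :
    X ^ 2 + C c * X + C d ∣ (X ^ Fintype.card F + X + C c : F[X]) := by
  set p : F[X] := X ^ 2 + C c * X + C d
  have := Fact.mk hp
  set ξ := AdjoinRoot.root p
  have haeval : ∀ y : AdjoinRoot p,
      aeval y p = y ^ 2 + AdjoinRoot.of p c * y + AdjoinRoot.of p d := by
    intro y
    simp [p]
  have hξ : aeval ξ p = 0 := AdjoinRoot.aeval_eq p ▸ AdjoinRoot.mk_self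
  have hξq : aeval (ξ ^ Fintype.card F) p = 0 := by
    rw [← expand_aeval, FiniteField.expand_card, map_pow, hξ, zero_pow Fintype.card_ne_zero]
  have hξq_ne : ξ ^ Fintype.card F ≠ ξ := by
    intro h
    have hdvd : p ∣ X ^ Nat.card F ^ 1 - X := by
      rw [← AdjoinRoot.mk_eq_zero, pow_one, Nat.card_eq_fintype_card]
      simpa using sub_eq_zero.mpr h
    have := hp.natDegree_dvd_of_dvd_X_pow_card_pow_sub_X hdvd
    rw [natDegree_X_sq_add_C_mul_X_add_C] at this
    omega
  have hprod : (ξ ^ Fintype.card F - ξ) * (ξ ^ Fintype.card F + ξ + AdjoinRoot.of p c) = 0 := by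
    rw [haeval] at hξ hξq
    linear_combination hξq - hξ
  rw [← AdjoinRoot.mk_eq_zero]
  simpa [sub_eq_zero, hξq_ne, ξ] using hprod

theorem exists_monic_X_sq_add_C_mul_X_add_C_mul_eval_eq (hF : 2 < Fintype.card F) {c d : F}
    (hp : Irreducible (X ^ 2 + C c * X + C d : F[X])) :
    ∃ Q : F[X], Q.Monic ∧ Q.natDegree = Fintype.card F - 2 ∧
      Q.coeff (Fintype.card F - 3) = -c ∧
      ∀ x : F, Q.eval x = (2 * x + c) / (X ^ 2 + C c * X + C d).eval x := by
  obtain ⟨Q, hQ⟩ := X_sq_add_C_mul_X_add_C_dvd hp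
  set q := Fintype.card F
  have hp_monic := monic_X_sq_add_C_mul_X_add_C c d
  have hlow : (X + C c : F[X]).degree < q := by
    rw [degree_X_add_C]
    exact_mod_cast (by omega : 1 < q)
  rw [add_assoc] at hQ
  have hN_monic : (X ^ q + (X + C c) : F[X]).Monic := monic_X_pow_add hlow
  have hN_deg : (X ^ q + (X + C c) : F[X]).natDegree = q := by
    rw [natDegree_add_eq_left_of_degree_lt (by rwa [degree_X_pow]), natDegree_X_pow]
  have hN_next : (X ^ q + (X + C c) : F[X]).nextCoeff = 0 := by
    rw [nextCoeff_of_natDegree_pos (by omega), hN_deg]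
    simp [coeff_X, coeff_C, show q - 1 ≠ q by omega, show 1 ≠ q - 1 by omega,
      show q - 1 ≠ 0 by omega]
  have hQ_monic : Q.Monic := hp_monic.of_mul_monic_left (hQ ▸ hN_monic)
  have hQ_deg : Q.natDegree = q - 2 := by
    have := congrArg natDegree hQ
    rw [hN_deg, hp_monic.natDegree_mul hQ_monic, natDegree_X_sq_add_C_mul_X_add_C] at this
    omega
  refine ⟨Q, hQ_monic, hQ_deg, ?_, fun x => ?_⟩
  · have := hp_monic.nextCoeff_mul hQ_monic
    rw [← hQ, hN_next, nextCoeff_X_sq_add_C_mul_X_add_C, nextCoeff_of_natDegree_pos (by omega),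
      hQ_deg] at this
    rw [show q - 3 = q - 2 - 1 by omega]
    linear_combination -this
  · have hpx := eval_ne_zero_of_irreducible hp (by rw [natDegree_X_sq_add_C_mul_X_add_C]; decide) x
    have := congrArg (eval x) hQ
    rw [eval_mul, eval_add, eval_add, eval_pow, eval_X, eval_C, FiniteField.pow_card] at this
    rw [eq_div_iff hpx]
    linear_combination -this

end Quadratic

theorem degree_sub_le_of_coeff_eq {R : Type*} [Ring R] {f g : R[X]} {n : ℕ}
    (hf : f.natDegree ≤ n + 2) (hg : g.natDegree ≤ n + 2)
    (h₂ : f.coeff (n + 2) = g.coeff (n + 2)) (h₁ : f.coeff (n + 1) = g.coeff (n + 1)) :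
    (f - g).degree ≤ n := by
  rw [degree_le_iff_coeff_zero]
  intro k hk
  rw [Nat.cast_lt] at hk
  rw [coeff_sub, sub_eq_zero]
  rcases (by omega : k = n + 1 ∨ k = n + 2 ∨ n + 2 < k) with rfl | rfl | hk
  · exact h₁
  · exact h₂
  · rw [coeff_eq_zero_of_natDegree_lt (by omega), coeff_eq_zero_of_natDegree_lt (by omega)]

theorem stmt6_general {F : Type*} [Field F] [Fintype F]
    (hq : 5 ≤ Fintype.card F) (hodd : Odd (Fintype.card F))
    (g : F[X]) (hg : g.degree = ((Fintype.card F - 2 : ℕ) : WithBot ℕ)) :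
    ∃ p : F[X], p.Monic ∧ Irreducible p ∧ p.natDegree = 2 ∧
      ∃ a b : F, (a, b) ≠ (0, 0) ∧
        ∃ h : F[X], h.degree ≤ ((Fintype.card F - 4 : ℕ) : WithBot ℕ) ∧
          ∀ x : F, g.eval x = (a + b * x) / p.eval x + h.eval x := by
  have hchar : ringChar F ≠ 2 := fun h => by
    simp [Nat.odd_iff, FiniteField.even_card_iff_char_two.mp h] at hodd
  obtain ⟨m, hm⟩ : ∃ m, Fintype.card F = m + 4 :=
    ⟨_, (Nat.sub_add_cancel (by omega)).symm⟩
  have hg_deg : g.natDegree = m + 2 := by rw [natDegree_eq_of_degree_eq_some hg, hm]; rfl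
  set β := g.leadingCoeff
  have hβ : β ≠ 0 := leadingCoeff_ne_zero.mpr (ne_zero_of_natDegree_gt (n := 0) (by omega))
  set c := -g.coeff (m + 1) / β
  obtain ⟨d, hp⟩ := exists_irreducible_X_sq_add_C_mul_X_add_C hchar c
  obtain ⟨Q, hQ_monic, hQ_deg, hQ_coeff, hQ_eval⟩ :=
    exists_monic_X_sq_add_C_mul_X_add_C_mul_eval_eq (by omega) hp
  rw [hm, show m + 4 - 2 = m + 2 from rfl] at hQ_deg
  rw [hm, show m + 4 - 3 = m + 1 from rfl] at hQ_coeff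
  refine ⟨_, monic_X_sq_add_C_mul_X_add_C c d, hp, natDegree_X_sq_add_C_mul_X_add_C c d,
    c * β, 2 * β, by simp [hβ, Ring.two_ne_zero hchar], g - C β * Q, ?_, fun x => ?_⟩
  · rw [hm, Nat.add_sub_cancel]
    refine degree_sub_le_of_coeff_eq hg_deg.le ((natDegree_C_mul_le _ _).trans hQ_deg.le) ?_ ?_
    · rw [coeff_C_mul, ← hQ_deg, hQ_monic.coeff_natDegree, mul_one, hQ_deg, ← hg_deg]
      rfl
    · rw [coeff_C_mul, hQ_coeff, mul_neg, mul_div_cancel₀ _ hβ, neg_neg]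
  · rw [eval_sub, eval_mul, eval_C, hQ_eval x]
    ring

/-- For odd `q ≥ 5`, every polynomial `g` of degree exactly `q - 2` agrees on all of
`F_q` with `(a+bx)/p(x) + h(x)` for some monic irreducible quadratic `p`, some
nonzero pair `(a,b)`, and some `h` of degree at most `q - 4`. -/
theorem stmt6 {F : Type*} [Field F] [Fintype F] [DecidableEq F]
    (hq : 5 ≤ Fintype.card F) (hodd : Odd (Fintype.card F))
    (g : F[X]) (hg : g.degree = ((Fintype.card F - 2 : ℕ) : WithBot ℕ)) :
    ∃ p : F[X], p.Monic ∧ Irreducible p ∧ p.natDegree = 2 ∧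
      ∃ a b : F, (a, b) ≠ (0, 0) ∧
        ∃ h : F[X], h.degree ≤ ((Fintype.card F - 4 : ℕ) : WithBot ℕ) ∧
          ∀ x : F, g.eval x = (a + b * x) / p.eval x + h.eval x :=
  stmt6_general hq hodd g hg
end

section
/- Let q be a prime power and let NRC = {(1,x,x²,x³) : x ∈ F_q} ∪ {(0,0,0,1)} ⊆ F_q⁴. Then the union, over all unordered pairs of distinct vectors v, w ∈ NRC, of the two-dimensional linear spans span_{F_q}{v,w}, has cardinality C(q+1,2)·(q−1)² + (q+1)(q−1) + 1, where C(q+1,2) = (q+1)q/2. -/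
/-- The normal rational curve in `F_q⁴` (plus the point at infinity). -/
def NRC (F : Type*) [Field F] : Set (Fin 4 → F) :=
  {v | ∃ x : F, v = ![1, x, x ^ 2, x ^ 3]} ∪ {![0, 0, 0, 1]}

section Aux

variable {F : Type*} [Field F]

/-- Parameterization of the NRC by `Option F`. -/
def nrcPt : Option F → Fin 4 → F
  | none => ![0, 0, 0, 1]
  | some x => ![1, x, x ^ 2, x ^ 3]

lemma nrcPt_inj : Function.Injective (nrcPt (F := F)) := by
  intro i j h
  match i, j with
  | none, none => rfl
  | some x, some y =>
      have := congrFun h 1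
      simp [nrcPt] at this
      rw [this]
  | none, some y =>
      have := congrFun h 0
      simp [nrcPt] at this
  | some x, none =>
      have := congrFun h 0
      simp [nrcPt] at this

lemma nrc_eq_range : NRC F = Set.range (nrcPt (F := F)) := by
  ext v
  constructor
  · rintro (⟨x, rfl⟩ | h)
    · exact ⟨some x, rfl⟩
    · exact ⟨none, h.symm ▸ rfl⟩
  · rintro ⟨i, rfl⟩
    match i with
    | none => exact Or.inr rfl
    | some x => exact Or.inl ⟨x, rfl⟩

lemma indep2 (i j : Option F) (hij : i ≠ j) (a b : F)
    (h : ∀ t : Fin 4, a * nrcPt i t + b * nrcPt j t = 0) : a = 0 ∧ b = 0 := by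
  have h0 := h 0; have h1 := h 1; have h3 := h 3
  match i, j with
  | none, none => exact absurd rfl hij
  | some x, some y =>
      have hxy : x ≠ y := by rintro rfl; exact hij rfl
      simp [nrcPt] at h0 h1
      have ha : a * (x - y) = 0 := by linear_combination h1 - y * h0
      have ha' : a = 0 := by
        rcases mul_eq_zero.1 ha with h | h
        · exact h
        · exact absurd (sub_eq_zero.1 h) hxy
      refine ⟨ha', ?_⟩; linear_combination h0 - ha'
  | some x, none =>
      simp [nrcPt] at h0 h3
      exact ⟨h0, by linear_combination h3 - x ^ 3 * h0⟩
  | none, some y =>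
      simp [nrcPt] at h0 h3
      exact ⟨by linear_combination h3 - y ^ 3 * h0, h0⟩

lemma indep3 (i j k : Option F) (hij : i ≠ j) (hik : i ≠ k) (hjk : j ≠ k) (a b d : F)
    (h : ∀ t : Fin 4, a * nrcPt i t + b * nrcPt j t + d * nrcPt k t = 0) :
    a = 0 ∧ b = 0 ∧ d = 0 := by
  have h0 := h 0; have h1 := h 1; have h2 := h 2; have h3 := h 3
  match i, j, k with
  | none, none, _ => exact absurd rfl hij
  | some _, none, none => exact absurd rfl hjk
  | none, some _, none => exact absurd rfl hik
  | some x, some y, some z =>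
      have hxy : x ≠ y := by rintro rfl; exact hij rfl
      have hxz : x ≠ z := by rintro rfl; exact hik rfl
      have hyz : y ≠ z := by rintro rfl; exact hjk rfl
      simp [nrcPt] at h0 h1 h2
      have ha : a * ((x - y) * (x - z)) = 0 := by
        linear_combination h2 - (y + z) * h1 + y * z * h0
      have hb : b * ((y - x) * (y - z)) = 0 := by
        linear_combination h2 - (x + z) * h1 + x * z * h0
      have ha' : a = 0 := by
        rcases mul_eq_zero.1 ha with h | h
        · exact h
        rcases mul_eq_zero.1 h with h | h
        · exact absurd (sub_eq_zero.1 h) hxy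
        · exact absurd (sub_eq_zero.1 h) hxz
      have hb' : b = 0 := by
        rcases mul_eq_zero.1 hb with h | h
        · exact h
        rcases mul_eq_zero.1 h with h | h
        · exact absurd (sub_eq_zero.1 h).symm hxy
        · exact absurd (sub_eq_zero.1 h) hyz
      exact ⟨ha', hb', by linear_combination h0 - ha' - hb'⟩
  | none, some y, some z =>
      have hyz : y ≠ z := by rintro rfl; exact hjk rfl
      simp [nrcPt] at h0 h1 h3
      have hb : b * (y - z) = 0 := by linear_combination h1 - z * h0
      have hb' : b = 0 := by
        rcases mul_eq_zero.1 hb with h | h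
        · exact h
        · exact absurd (sub_eq_zero.1 h) hyz
      have hd' : d = 0 := by linear_combination h0 - hb'
      exact ⟨by linear_combination h3 - y ^ 3 * hb' - z ^ 3 * hd', hb', hd'⟩
  | some x, none, some z =>
      have hxz : x ≠ z := by rintro rfl; exact hik rfl
      simp [nrcPt] at h0 h1 h3
      have ha : a * (x - z) = 0 := by linear_combination h1 - z * h0
      have ha' : a = 0 := by
        rcases mul_eq_zero.1 ha with h | h
        · exact h
        · exact absurd (sub_eq_zero.1 h) hxz
      have hd' : d = 0 := by linear_combination h0 - ha'
      exact ⟨ha', by linear_combination h3 - x ^ 3 * ha' - z ^ 3 * hd', hd'⟩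
  | some x, some y, none =>
      have hxy : x ≠ y := by rintro rfl; exact hij rfl
      simp [nrcPt] at h0 h1 h3
      have ha : a * (x - y) = 0 := by linear_combination h1 - y * h0
      have ha' : a = 0 := by
        rcases mul_eq_zero.1 ha with h | h
        · exact h
        · exact absurd (sub_eq_zero.1 h) hxy
      have hb' : b = 0 := by linear_combination h0 - ha'
      exact ⟨ha', hb', by linear_combination h3 - x ^ 3 * ha' - y ^ 3 * hb'⟩

lemma indep4 (i j k l : Option F) (hij : i ≠ j) (hik : i ≠ k) (hil : i ≠ l)
    (hjk : j ≠ k) (hjl : j ≠ l) (hkl : k ≠ l) (a b d e : F)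
    (h : ∀ t : Fin 4, a * nrcPt i t + b * nrcPt j t + d * nrcPt k t + e * nrcPt l t = 0) :
    a = 0 ∧ b = 0 ∧ d = 0 ∧ e = 0 := by
  have h0 := h 0; have h1 := h 1; have h2 := h 2; have h3 := h 3
  match i, j, k, l with
  | none, none, _, _ => exact absurd rfl hij
  | none, _, none, _ => exact absurd rfl hik
  | none, _, _, none => exact absurd rfl hil
  | _, none, none, _ => exact absurd rfl hjk
  | _, none, _, none => exact absurd rfl hjl
  | _, _, none, none => exact absurd rfl hkl
  | some x, some y, some z, some w =>
      have hxy : x ≠ y := by rintro rfl; exact hij rfl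
      have hxz : x ≠ z := by rintro rfl; exact hik rfl
      have hxw : x ≠ w := by rintro rfl; exact hil rfl
      have hyz : y ≠ z := by rintro rfl; exact hjk rfl
      have hyw : y ≠ w := by rintro rfl; exact hjl rfl
      have hzw : z ≠ w := by rintro rfl; exact hkl rfl
      simp [nrcPt] at h0 h1 h2 h3
      have ha : a * ((x - y) * (x - z) * (x - w)) = 0 := by
        linear_combination h3 - (y + z + w) * h2 + (y * z + y * w + z * w) * h1 - y * z * w * h0
      have hb : b * ((y - x) * (y - z) * (y - w)) = 0 := by
        linear_combination h3 - (x + z + w) * h2 + (x * z + x * w + z * w) * h1 - x * z * w * h0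
      have hd : d * ((z - x) * (z - y) * (z - w)) = 0 := by
        linear_combination h3 - (x + y + w) * h2 + (x * y + x * w + y * w) * h1 - x * y * w * h0
      have ha' : a = 0 := (mul_eq_zero.1 ha).resolve_right
        (mul_ne_zero (mul_ne_zero (sub_ne_zero.2 hxy) (sub_ne_zero.2 hxz)) (sub_ne_zero.2 hxw))
      have hb' : b = 0 := (mul_eq_zero.1 hb).resolve_right
        (mul_ne_zero (mul_ne_zero (sub_ne_zero.2 hxy.symm) (sub_ne_zero.2 hyz)) (sub_ne_zero.2 hyw))
      have hd' : d = 0 := (mul_eq_zero.1 hd).resolve_right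
        (mul_ne_zero (mul_ne_zero (sub_ne_zero.2 hxz.symm) (sub_ne_zero.2 hyz.symm)) (sub_ne_zero.2 hzw))
      exact ⟨ha', hb', hd', by linear_combination h0 - ha' - hb' - hd'⟩
  | none, some y, some z, some w =>
      have hyz : y ≠ z := by rintro rfl; exact hjk rfl
      have hyw : y ≠ w := by rintro rfl; exact hjl rfl
      have hzw : z ≠ w := by rintro rfl; exact hkl rfl
      simp [nrcPt] at h0 h1 h2 h3
      have hb : b * ((y - z) * (y - w)) = 0 := by
        linear_combination h2 - (z + w) * h1 + z * w * h0
      have hd : d * ((z - y) * (z - w)) = 0 := by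
        linear_combination h2 - (y + w) * h1 + y * w * h0
      have hb' : b = 0 := (mul_eq_zero.1 hb).resolve_right
        (mul_ne_zero (sub_ne_zero.2 hyz) (sub_ne_zero.2 hyw))
      have hd' : d = 0 := (mul_eq_zero.1 hd).resolve_right
        (mul_ne_zero (sub_ne_zero.2 hyz.symm) (sub_ne_zero.2 hzw))
      have he' : e = 0 := by linear_combination h0 - hb' - hd'
      exact ⟨by linear_combination h3 - y ^ 3 * hb' - z ^ 3 * hd' - w ^ 3 * he', hb', hd', he'⟩
  | some x, none, some z, some w =>
      have hxz : x ≠ z := by rintro rfl; exact hik rfl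
      have hxw : x ≠ w := by rintro rfl; exact hil rfl
      have hzw : z ≠ w := by rintro rfl; exact hkl rfl
      simp [nrcPt] at h0 h1 h2 h3
      have ha : a * ((x - z) * (x - w)) = 0 := by
        linear_combination h2 - (z + w) * h1 + z * w * h0
      have hd : d * ((z - x) * (z - w)) = 0 := by
        linear_combination h2 - (x + w) * h1 + x * w * h0
      have ha' : a = 0 := (mul_eq_zero.1 ha).resolve_right
        (mul_ne_zero (sub_ne_zero.2 hxz) (sub_ne_zero.2 hxw))
      have hd' : d = 0 := (mul_eq_zero.1 hd).resolve_right
        (mul_ne_zero (sub_ne_zero.2 hxz.symm) (sub_ne_zero.2 hzw))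
      have he' : e = 0 := by linear_combination h0 - ha' - hd'
      exact ⟨ha', by linear_combination h3 - x ^ 3 * ha' - z ^ 3 * hd' - w ^ 3 * he', hd', he'⟩
  | some x, some y, none, some w =>
      have hxy : x ≠ y := by rintro rfl; exact hij rfl
      have hxw : x ≠ w := by rintro rfl; exact hil rfl
      have hyw : y ≠ w := by rintro rfl; exact hjl rfl
      simp [nrcPt] at h0 h1 h2 h3
      have ha : a * ((x - y) * (x - w)) = 0 := by
        linear_combination h2 - (y + w) * h1 + y * w * h0
      have hb : b * ((y - x) * (y - w)) = 0 := by
        linear_combination h2 - (x + w) * h1 + x * w * h0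
      have ha' : a = 0 := (mul_eq_zero.1 ha).resolve_right
        (mul_ne_zero (sub_ne_zero.2 hxy) (sub_ne_zero.2 hxw))
      have hb' : b = 0 := (mul_eq_zero.1 hb).resolve_right
        (mul_ne_zero (sub_ne_zero.2 hxy.symm) (sub_ne_zero.2 hyw))
      have he' : e = 0 := by linear_combination h0 - ha' - hb'
      exact ⟨ha', hb', by linear_combination h3 - x ^ 3 * ha' - y ^ 3 * hb' - w ^ 3 * he', he'⟩
  | some x, some y, some z, none =>
      have hxy : x ≠ y := by rintro rfl; exact hij rfl
      have hxz : x ≠ z := by rintro rfl; exact hik rfl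
      have hyz : y ≠ z := by rintro rfl; exact hjk rfl
      simp [nrcPt] at h0 h1 h2 h3
      have ha : a * ((x - y) * (x - z)) = 0 := by
        linear_combination h2 - (y + z) * h1 + y * z * h0
      have hb : b * ((y - x) * (y - z)) = 0 := by
        linear_combination h2 - (x + z) * h1 + x * z * h0
      have ha' : a = 0 := (mul_eq_zero.1 ha).resolve_right
        (mul_ne_zero (sub_ne_zero.2 hxy) (sub_ne_zero.2 hxz))
      have hb' : b = 0 := (mul_eq_zero.1 hb).resolve_right
        (mul_ne_zero (sub_ne_zero.2 hxy.symm) (sub_ne_zero.2 hyz))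
      have hd' : d = 0 := by linear_combination h0 - ha' - hb'
      exact ⟨ha', hb', hd', by linear_combination h3 - x ^ 3 * ha' - y ^ 3 * hb' - z ^ 3 * hd'⟩

lemma nrcPt_ne_zero (i : Option F) : nrcPt i ≠ (0 : Fin 4 → F) := by
  match i with
  | none => intro h; have := congrFun h 3; simp [nrcPt] at this
  | some x => intro h; have := congrFun h 0; simp [nrcPt] at this

lemma double_ne_zero {i j : Option F} (hij : i ≠ j) {a b : F} (ha : a ≠ 0) :
    a • nrcPt i + b • nrcPt j ≠ (0 : Fin 4 → F) := by
  intro h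
  refine ha (indep2 i j hij a b (fun t => ?_)).1
  have := congrFun h t
  simp at this
  linear_combination this

lemma single_eq_single {i i' : Option F} {a a' : F} (ha : a ≠ 0)
    (h : a • nrcPt i = a' • nrcPt (F := F) i') : i = i' ∧ a = a' := by
  by_cases hii : i = i'
  · subst hii
    refine ⟨rfl, ?_⟩
    have h0 : (a - a') • nrcPt (F := F) i = 0 := by rw [sub_smul, h, sub_self]
    rcases smul_eq_zero.1 h0 with h1 | h1
    · exact sub_eq_zero.1 h1
    · exact absurd h1 (nrcPt_ne_zero i)
  · exfalso
    refine ha (indep2 i i' hii a (-a') (fun t => ?_)).1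
    have := congrFun h t
    simp at this
    linear_combination this

lemma single_ne_double {i i' j' : Option F} (h' : i' ≠ j') {a a' b' : F}
    (ha : a ≠ 0) (ha' : a' ≠ 0) (hb' : b' ≠ 0) :
    a • nrcPt i ≠ a' • nrcPt i' + b' • nrcPt (F := F) j' := by
  intro h
  have hs : ∀ t : Fin 4, a * nrcPt i t - a' * nrcPt i' t - b' * nrcPt j' t = 0 := by
    intro t
    have := congrFun h t
    simp at this
    linear_combination this
  by_cases h1 : i = i'
  · subst h1
    exact hb' (neg_eq_zero.1 (indep2 i j' h' (a - a') (-b')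
      (fun t => by linear_combination hs t)).2)
  · by_cases h2 : i = j'
    · subst h2
      exact ha' (neg_eq_zero.1 (indep2 i' i (fun e => h1 e.symm) (-a') (a - b')
        (fun t => by linear_combination hs t)).1)
    · exact ha (indep3 i i' j' h1 h2 h' a (-a') (-b')
        (fun t => by linear_combination hs t)).1


end Aux


section Main

variable (F : Type*) [Field F] [Fintype F] [DecidableEq F]

/-- An arbitrary enumeration of `Option F`. -/
noncomputable def ordE : Option F ≃ Fin (Fintype.card (Option F)) := Fintype.equivFin _

lemma double_eq_double {i j i' j' : Option F} {a b a' b' : F}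
    (hij : ordE F i < ordE F j) (hij' : ordE F i' < ordE F j')
    (ha : a ≠ 0) (hb : b ≠ 0) (ha' : a' ≠ 0) (hb' : b' ≠ 0)
    (h : a • nrcPt i + b • nrcPt j = a' • nrcPt i' + b' • nrcPt (F := F) j') :
    i = i' ∧ j = j' ∧ a = a' ∧ b = b' := by
  have hneij : i ≠ j := by rintro rfl; exact lt_irrefl _ hij
  have hneij' : i' ≠ j' := by rintro rfl; exact lt_irrefl _ hij'
  have hs : ∀ t : Fin 4,
      a * nrcPt i t + b * nrcPt j t - a' * nrcPt i' t - b' * nrcPt j' t = 0 := by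
    intro t
    have := congrFun h t
    simp at this
    linear_combination this
  by_cases h1 : i = i'
  · subst h1
    by_cases h2 : j = j'
    · subst h2
      obtain ⟨e1, e2⟩ := indep2 i j hneij (a - a') (b - b')
        (fun t => by linear_combination hs t)
      exact ⟨rfl, rfl, sub_eq_zero.1 e1, sub_eq_zero.1 e2⟩
    · exact absurd (indep3 i j j' hneij hneij' h2 (a - a') b (-b')
        (fun t => by linear_combination hs t)).2.1 hb
  · by_cases h2 : i = j'
    · subst h2
      by_cases h3 : j = i'
      · subst h3
        exact absurd (hij.trans hij') (lt_irrefl _)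
      · exact absurd (neg_eq_zero.1 (indep3 i j i' hneij h1 h3 (a - b') b (-a')
          (fun t => by linear_combination hs t)).2.2) ha'
    · by_cases h3 : j = i'
      · subst h3
        exact absurd (indep3 i j j' hneij h2 hneij' a (b - a') (-b')
          (fun t => by linear_combination hs t)).1 ha
      · by_cases h4 : j = j'
        · subst h4
          exact absurd (indep3 i j i' hneij h1 (Ne.symm hneij') a (b - b') (-a')
            (fun t => by linear_combination hs t)).1 ha
        · exact absurd (indep4 i j i' j' hneij h1 h2 h3 h4 hneij' a b (-a') (-b')
            (fun t => by linear_combination hs t)).1 ha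

/-- Parameter space for the points of the union of the spans. -/
def parS : Type _ :=
  Unit ⊕ (Option F × {a : F // a ≠ 0}) ⊕
    (Σ _j : Option F, ({i : Option F // ordE F i < ordE F _j} ×
      {a : F // a ≠ 0} × {a : F // a ≠ 0}))

noncomputable instance : Fintype (parS F) := by unfold parS; infer_instance

noncomputable def mapS : parS F → (Fin 4 → F)
  | .inl _ => 0
  | .inr (.inl (i, a)) => a.1 • nrcPt i
  | .inr (.inr ⟨j, i, a, b⟩) => a.1 • nrcPt i.1 + b.1 • nrcPt j

lemma mapS_inj : Function.Injective (mapS F) := by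
  rintro t1 t2 h
  rcases t1 with ⟨⟩ | ⟨⟨i1, a1, ha1⟩ | ⟨j1, ⟨i1, hlt1⟩, ⟨a1, ha1⟩, ⟨b1, hb1⟩⟩⟩ <;>
    rcases t2 with ⟨⟩ | ⟨⟨i2, a2, ha2⟩ | ⟨j2, ⟨i2, hlt2⟩, ⟨a2, ha2⟩, ⟨b2, hb2⟩⟩⟩ <;>
      simp only [mapS] at h
  · rfl
  · exact absurd h.symm (smul_ne_zero ha2 (nrcPt_ne_zero i2))
  · have h12 : i2 ≠ j2 := by rintro rfl; exact lt_irrefl _ hlt2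
    exact absurd h.symm (double_ne_zero h12 ha2)
  · exact absurd h (smul_ne_zero ha1 (nrcPt_ne_zero i1))
  · obtain ⟨rfl, rfl⟩ := single_eq_single ha1 h
    rfl
  · have h12 : i2 ≠ j2 := by rintro rfl; exact lt_irrefl _ hlt2
    exact absurd h (single_ne_double h12 ha1 ha2 hb2)
  · have h12 : i1 ≠ j1 := by rintro rfl; exact lt_irrefl _ hlt1
    exact absurd h (double_ne_zero h12 ha1)
  · have h12 : i1 ≠ j1 := by rintro rfl; exact lt_irrefl _ hlt1
    exact absurd h.symm (single_ne_double h12 ha2 ha1 hb1)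
  · obtain ⟨rfl, rfl, rfl, rfl⟩ := double_eq_double F hlt1 hlt2 ha1 hb1 ha2 hb2 h
    rfl

lemma range_eq :
    (⋃ (v : Fin 4 → F) (_ : v ∈ NRC F) (w : Fin 4 → F) (_ : w ∈ NRC F)
        (_ : v ≠ w), (Submodule.span F {v, w} : Set (Fin 4 → F))) = Set.range (mapS F) := by
  have hmem : ∀ i : Option F, nrcPt i ∈ NRC F := by
    intro i; rw [nrc_eq_range]; exact ⟨i, rfl⟩
  ext u
  simp only [Set.mem_iUnion, SetLike.mem_coe]
  constructor
  · rintro ⟨v, hv, w, hw, hvw, hu⟩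
    rw [nrc_eq_range] at hv hw
    obtain ⟨i, rfl⟩ := hv
    obtain ⟨j, rfl⟩ := hw
    have hij : i ≠ j := fun e => hvw (by rw [e])
    obtain ⟨a, b, rfl⟩ := Submodule.mem_span_pair.1 hu
    by_cases ha : a = 0 <;> by_cases hb : b = 0
    · exact ⟨Sum.inl (), by simp [mapS, ha, hb]⟩
    · exact ⟨Sum.inr (Sum.inl (j, ⟨b, hb⟩)), by simp [mapS, ha]⟩
    · exact ⟨Sum.inr (Sum.inl (i, ⟨a, ha⟩)), by simp [mapS, hb]⟩
    · rcases lt_trichotomy (ordE F i) (ordE F j) with hlt | heq | hgt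
      · exact ⟨Sum.inr (Sum.inr ⟨j, ⟨i, hlt⟩, ⟨a, ha⟩, ⟨b, hb⟩⟩), rfl⟩
      · exact absurd ((ordE F).injective heq) hij
      · exact ⟨Sum.inr (Sum.inr ⟨i, ⟨j, hgt⟩, ⟨b, hb⟩, ⟨a, ha⟩⟩), add_comm _ _⟩
  · rintro ⟨t, rfl⟩
    haveI : Nonempty F := ⟨0⟩
    rcases t with ⟨⟩ | ⟨⟨i, a, ha⟩ | ⟨j, ⟨i, hlt⟩, ⟨a, ha⟩, ⟨b, hb⟩⟩⟩
    · obtain ⟨i, j, hij⟩ := exists_pair_ne (Option F)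
      refine ⟨nrcPt i, hmem i, nrcPt j, hmem j, fun e => hij (nrcPt_inj e), ?_⟩
      simp only [mapS]
      exact Submodule.zero_mem _
    · obtain ⟨j, hj⟩ := exists_ne i
      refine ⟨nrcPt i, hmem i, nrcPt j, hmem j, fun e => hj (nrcPt_inj e.symm), ?_⟩
      simp only [mapS]
      exact Submodule.smul_mem _ a (Submodule.subset_span (Set.mem_insert _ _))
    · have hij : i ≠ j := by rintro rfl; exact lt_irrefl _ hlt
      refine ⟨nrcPt i, hmem i, nrcPt j, hmem j, fun e => hij (nrcPt_inj e), ?_⟩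
      simp only [mapS]
      exact Submodule.mem_span_pair.2 ⟨a, b, rfl⟩

lemma card_nz : Fintype.card {a : F // a ≠ 0} = Fintype.card F - 1 := by
  rw [← Fintype.card_units]
  exact Fintype.card_congr unitsEquivNeZero.symm

lemma card_lt (j : Option F) :
    Fintype.card {i : Option F // ordE F i < ordE F j} = (ordE F j : ℕ) := by
  rw [Fintype.card_congr (⟨fun i => (⟨(ordE F i.1 : ℕ), i.2⟩ : Fin (ordE F j : ℕ)),
    fun t => ⟨(ordE F).symm ⟨t.1, t.2.trans (ordE F j).isLt⟩, by
      simpa using (Fin.mk_lt_mk.2 t.2 : (⟨t.1, t.2.trans (ordE F j).isLt⟩ : Fin _) < ordE F j)⟩,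
    fun i => by simp, fun t => by simp⟩ :
    {i : Option F // ordE F i < ordE F j} ≃ Fin (ordE F j : ℕ))]
  exact Fintype.card_fin _

lemma card_parS : Nat.card (parS F) =
    (Fintype.card F + 1) * Fintype.card F / 2 * (Fintype.card F - 1) ^ 2
      + (Fintype.card F + 1) * (Fintype.card F - 1) + 1 := by
  have hsum : ∑ j : Option F, ((ordE F j : ℕ))
      = (Fintype.card F + 1) * Fintype.card F / 2 := by
    rw [Fintype.sum_equiv (ordE F) _ (fun t => (t : ℕ)) (fun j => rfl),
      Fin.sum_univ_eq_sum_range (fun i => i), Finset.sum_range_id]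
    simp [Fintype.card_option]
  have e : parS F = (Unit ⊕ (Option F × {a : F // a ≠ 0}) ⊕
      (Σ _j : Option F, ({i : Option F // ordE F i < ordE F _j} ×
        {a : F // a ≠ 0} × {a : F // a ≠ 0}))) := rfl
  rw [e, Nat.card_eq_fintype_card]
  simp only [Fintype.card_sum, Fintype.card_prod, Fintype.card_sigma, card_nz, card_lt,
    Fintype.card_option, Fintype.card_unit]
  rw [← Finset.sum_mul, hsum, sq]
  ring

end Main

/-- The union of the spans of all unordered pairs of distinct vectors of the
normal rational curve `NRC ⊆ F_q⁴` has cardinality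
`C(q+1,2)(q-1)² + (q+1)(q-1) + 1`. -/
theorem stmt9 {F : Type*} [Field F] [Fintype F] [DecidableEq F] :
    Nat.card ↥(⋃ (v : Fin 4 → F) (_ : v ∈ NRC F) (w : Fin 4 → F) (_ : w ∈ NRC F)
        (_ : v ≠ w), (Submodule.span F {v, w} : Set (Fin 4 → F)))
      = (Fintype.card F + 1) * Fintype.card F / 2 * (Fintype.card F - 1) ^ 2
        + (Fintype.card F + 1) * (Fintype.card F - 1) + 1 := by
  rw [range_eq, Nat.card_range_of_injective (mapS_inj F), card_parS]
end

section
/- Let q ≥ 5 be an odd prime power and let p_1(x) ≠ p_2(x) be two distinct monic irreducible quadratic polynomials in F_q[x]. Then the set of pairs (a_1,b_1) ∈ F_q²∖{(0,0)} for which there exist a pair (a_2,b_2) ∈ F_q²∖{(0,0)} and a polynomial f ∈ F_q[x] of degree at most q−4 with (a_1+b_1x)/p_1(x) = (a_2+b_2x)/p_2(x) + f(x) for all x ∈ F_q has cardinality exactly q−1. -/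
/-!
Clearing denominators, the condition says that `G = (a₁ + b₁X) p₂ - (a₂ + b₂X) p₁ - f p₁ p₂`
vanishes on `F`. As `deg G ≤ q`, this forces `G = c (X ^ q - X)` for a constant `c`, so modulo `p₁`
(coprime to `p₂`, and not dividing `X ^ q - X` since it has no roots) we get
`a₁ + b₁X ≡ c (X ^ q - X) p₂⁻¹`. Hence the admissible `(a₁, b₁)` are exactly the multiples `c • w`,
`c ≠ 0`, of one nonzero vector `w`. Conversely, for each `c ≠ 0` the same congruence modulo `p₂`
gives the partner `(a₂, b₂)`, and `f` comes from the Chinese remainder theorem.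
-/

open Polynomial

namespace Polynomial

section Field

variable {K : Type*} [Field K]

theorem eval_ne_zero_of_irreducible_of_natDegree_ne_one {p : K[X]} (hp : Irreducible p)
    (hdeg : p.natDegree ≠ 1) (x : K) : p.eval x ≠ 0 := fun hx =>
  hdeg (natDegree_eq_of_degree_eq_some (degree_eq_one_of_irreducible_of_root hp hx))

theorem Monic.isCoprime_of_irreducible_of_ne {p q : K[X]} (hp : p.Monic) (hq : q.Monic)
    (hpi : Irreducible p) (hqi : Irreducible q) (hne : p ≠ q) : IsCoprime p q :=
  hpi.coprime_iff_not_dvd.2 fun h =>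
    hne (eq_of_monic_of_associated hp hq ((hpi.dvd_irreducible_iff_associated hqi).1 h))

theorem Monic.exists_natDegree_lt_dvd_mul_sub {p q : K[X]} (hp : p.Monic) (hp1 : p ≠ 1)
    (hpq : IsCoprime p q) (g : K[X]) : ∃ u, u.natDegree < p.natDegree ∧ p ∣ u * q - g := by
  obtain ⟨s, t, hst⟩ := hpq
  refine ⟨g * t %ₘ p, natDegree_modByMonic_lt _ hp hp1,
    ⟨-(g * s) - (g * t /ₘ p) * q, ?_⟩⟩
  rw [modByMonic_eq_sub_mul_div]
  linear_combination g * hst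

theorem eq_of_dvd_mul_sub_of_natDegree_lt {p q u v g : K[X]} (hpq : IsCoprime p q)
    (hu : u.natDegree < p.natDegree) (hv : v.natDegree < p.natDegree)
    (hug : p ∣ u * q - g) (hvg : p ∣ v * q - g) : u = v := by
  have hdvd : p ∣ (u - v) * q := by
    simpa only [sub_mul, sub_sub_sub_cancel_right] using dvd_sub hug hvg
  refine sub_eq_zero.1 (eq_zero_of_dvd_of_natDegree_lt (hpq.dvd_of_dvd_mul_right hdvd) ?_)
  exact (natDegree_sub_le u v).trans_lt (max_lt hu hv)

theorem div_eq_div_add_iff_eval_eq_zero {p₁ p₂ u₁ u₂ f : K[X]} {x : K}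
    (h₁ : p₁.eval x ≠ 0) (h₂ : p₂.eval x ≠ 0) :
    u₁.eval x / p₁.eval x = u₂.eval x / p₂.eval x + f.eval x ↔
      (u₁ * p₂ - u₂ * p₁ - f * (p₁ * p₂)).eval x = 0 := by
  rw [div_add' _ _ _ h₂, div_eq_div_iff h₁ h₂]
  simp only [eval_sub, eval_mul]
  constructor <;> intro h <;> linear_combination h

end Field

section FiniteField

variable {F : Type*} [Field F] [Fintype F]

theorem eq_C_mul_X_pow_card_sub_X_of_eval_eq_zero {G : F[X]}
    (hdeg : G.natDegree ≤ Fintype.card F) (hG : ∀ x, G.eval x = 0) :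
    G = C (G.coeff (Fintype.card F)) * (X ^ Fintype.card F - X) := by
  have hq : 1 < Fintype.card F := Fintype.one_lt_card
  rw [← sub_eq_zero]
  refine eq_zero_of_degree_lt_of_eval_finset_eq_zero Finset.univ ?_ fun x _ => ?_
  · rw [Finset.card_univ, degree_lt_iff_coeff_zero]
    intro m hm
    rcases hm.eq_or_lt with rfl | hlt
    · simp [coeff_X, hq.ne]
    · have hm1 : 1 ≠ m := by omega
      simp [coeff_X, coeff_eq_zero_of_natDegree_lt (hdeg.trans_lt hlt), hlt.ne', hm1]
  · simp [hG, FiniteField.pow_card]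

theorem not_dvd_X_pow_card_sub_X {p : F[X]} (hp : Irreducible p) (hdeg : p.natDegree ≠ 1) :
    ¬p ∣ X ^ Fintype.card F - X := fun h =>
  hdeg <| Nat.dvd_one.1 <| hp.natDegree_dvd_of_dvd_X_pow_card_pow_sub_X (n := 1) <| by
    rwa [pow_one, Nat.card_eq_fintype_card]

end FiniteField

end Polynomial

theorem Nat.card_subtype_exists_smul_eq {K V : Type*} [Field K] [AddCommGroup V] [Module K V]
    {w : V} (hw : w ≠ 0) :
    Nat.card {v : V // ∃ c : K, c ≠ 0 ∧ v = c • w} = Nat.card K - 1 := by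
  have hinj : Function.Injective fun c : Kˣ => (c : K) • w :=
    fun c d h => Units.ext (smul_left_injective K hw h)
  rw [← Nat.card_units, ← Nat.card_range_of_injective hinj]
  refine Nat.card_congr (Equiv.subtypeEquivRight fun v => ?_)
  constructor
  · rintro ⟨c, hc, rfl⟩
    exact ⟨Units.mk0 c hc, rfl⟩
  · rintro ⟨c, rfl⟩
    exact ⟨c, c.ne_zero, rfl⟩

section LinearPoly

variable {F : Type*} [Field F]

noncomputable def linearPoly (ab : F × F) : F[X] := C ab.1 + C ab.2 * X

@[simp]
theorem eval_linearPoly (ab : F × F) (x : F) : (linearPoly ab).eval x = ab.1 + ab.2 * x := by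
  simp [linearPoly]

theorem linearPoly_smul (c : F) (ab : F × F) : linearPoly (c • ab) = C c * linearPoly ab := by
  simp only [linearPoly, Prod.smul_fst, Prod.smul_snd, smul_eq_mul, C_mul]
  ring

theorem natDegree_linearPoly_le (ab : F × F) : (linearPoly ab).natDegree ≤ 1 := by
  unfold linearPoly
  compute_degree

theorem linearPoly_eq_zero_iff {ab : F × F} : linearPoly ab = 0 ↔ ab = 0 := by
  refine ⟨fun h => ?_, fun h => by simp [h, linearPoly]⟩
  have h₀ := congrArg (coeff · 0) h
  have h₁ := congrArg (coeff · 1) h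
  simp only [linearPoly, coeff_add, coeff_C, coeff_C_mul_X, coeff_zero] at h₀ h₁
  simp_all [Prod.ext_iff]

theorem linearPoly_injective : Function.Injective (linearPoly (F := F)) := by
  intro ab ab' h
  rw [← sub_eq_zero, ← linearPoly_eq_zero_iff]
  simp only [linearPoly, Prod.fst_sub, Prod.snd_sub, C_sub] at h ⊢
  linear_combination h

theorem exists_linearPoly_eq {u : F[X]} (hu : u.natDegree ≤ 1) : ∃ ab, linearPoly ab = u :=
  ⟨(u.coeff 0, u.coeff 1), by rw [linearPoly, add_comm, ← eq_X_add_C_of_natDegree_le_one hu]⟩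

end LinearPoly

section PartialFractions

variable {F : Type*} [Field F] [Fintype F] {p₁ p₂ : F[X]}

def HasPartner (p₁ p₂ : F[X]) (ab : F × F) : Prop :=
  ab ≠ (0, 0) ∧ ∃ a₂ b₂ : F, (a₂, b₂) ≠ (0, 0) ∧
    ∃ f : F[X], f.degree ≤ ((Fintype.card F - 4 : ℕ) : WithBot ℕ) ∧
      ∀ x : F, (ab.1 + ab.2 * x) / p₁.eval x = (a₂ + b₂ * x) / p₂.eval x + f.eval x

theorem exists_dvd_sub_C_mul_of_eval_eq_zero (hq : 4 ≤ Fintype.card F)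
    (hd₁ : p₁.natDegree = 2) (hd₂ : p₂.natDegree = 2) {u₁ u₂ f : F[X]}
    (hu₁ : u₁.natDegree ≤ 1) (hu₂ : u₂.natDegree ≤ 1) (hf : f.natDegree ≤ Fintype.card F - 4)
    (h : ∀ x, (u₁ * p₂ - u₂ * p₁ - f * (p₁ * p₂)).eval x = 0) :
    ∃ c, p₁ ∣ u₁ * p₂ - C c * (X ^ Fintype.card F - X) := by
  have h₁ : (u₁ * p₂).natDegree ≤ 3 := natDegree_mul_le.trans (by omega)
  have h₂ : (u₂ * p₁).natDegree ≤ 3 := natDegree_mul_le.trans (by omega)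
  have h₃ : (f * (p₁ * p₂)).natDegree ≤ Fintype.card F :=
    natDegree_mul_le.trans (by have := natDegree_mul_le (p := p₁) (q := p₂); omega)
  have hG := eq_C_mul_X_pow_card_sub_X_of_eval_eq_zero
    ((natDegree_sub_le_of_le (natDegree_sub_le_of_le h₁ h₂) h₃).trans (by omega)) h
  exact ⟨_, u₂ + f * p₂, by linear_combination hG⟩

theorem exists_eval_eq_zero_of_dvd (hd₁ : p₁.natDegree = 2) (hd₂ : p₂.natDegree = 2)
    (hcop : IsCoprime p₁ p₂) {u₁ u₂ : F[X]}
    (hu₁ : u₁.natDegree ≤ 1) (hu₂ : u₂.natDegree ≤ 1) (c : F)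
    (h₁ : p₁ ∣ u₁ * p₂ - u₂ * p₁ - C c * (X ^ Fintype.card F - X))
    (h₂ : p₂ ∣ u₁ * p₂ - u₂ * p₁ - C c * (X ^ Fintype.card F - X)) :
    ∃ f : F[X], f.natDegree ≤ Fintype.card F - 4 ∧
      ∀ x, (u₁ * p₂ - u₂ * p₁ - f * (p₁ * p₂)).eval x = 0 := by
  obtain ⟨f, hf⟩ := hcop.mul_dvd h₁ h₂
  refine ⟨f, ?_, fun x => ?_⟩
  · rcases eq_or_ne f 0 with rfl | hf0
    · simp
    have h₁ : (u₁ * p₂).natDegree ≤ 3 := natDegree_mul_le.trans (by omega)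
    have h₂ : (u₂ * p₁).natDegree ≤ 3 := natDegree_mul_le.trans (by omega)
    have h₃ : (C c * (X ^ Fintype.card F - X)).natDegree ≤ Fintype.card F :=
      (natDegree_C_mul_le _ _).trans
        (FiniteField.X_pow_card_sub_X_natDegree_eq F Fintype.one_lt_card).le
    have hG := natDegree_sub_le_of_le (natDegree_sub_le_of_le h₁ h₂) h₃
    have hp₁ : p₁ ≠ 0 := ne_zero_of_natDegree_gt (n := 0) (by omega)
    have hp₂ : p₂ ≠ 0 := ne_zero_of_natDegree_gt (n := 0) (by omega)
    rw [hf, natDegree_mul (mul_ne_zero hp₁ hp₂) hf0, natDegree_mul hp₁ hp₂] at hG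
    omega
  · have hG : u₁ * p₂ - u₂ * p₁ - f * (p₁ * p₂) = C c * (X ^ Fintype.card F - X) := by
      linear_combination hf
    simp [hG, FiniteField.pow_card]

theorem HasPartner.exists_dvd (hq : 4 ≤ Fintype.card F) (hi₁ : Irreducible p₁)
    (hd₁ : p₁.natDegree = 2) (hi₂ : Irreducible p₂) (hd₂ : p₂.natDegree = 2)
    (hcop : IsCoprime p₁ p₂) {ab : F × F} (h : HasPartner p₁ p₂ ab) :
    ∃ c, c ≠ 0 ∧ p₁ ∣ linearPoly ab * p₂ - C c * (X ^ Fintype.card F - X) := by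
  obtain ⟨hab, a₂, b₂, -, f, hf, heq⟩ := h
  have hvanish : ∀ x,
      (linearPoly ab * p₂ - linearPoly (a₂, b₂) * p₁ - f * (p₁ * p₂)).eval x = 0 := fun x => by
    rw [← div_eq_div_add_iff_eval_eq_zero
      (eval_ne_zero_of_irreducible_of_natDegree_ne_one hi₁ (by omega) x)
      (eval_ne_zero_of_irreducible_of_natDegree_ne_one hi₂ (by omega) x)]
    simpa using heq x
  obtain ⟨c, hc⟩ := exists_dvd_sub_C_mul_of_eval_eq_zero hq hd₁ hd₂ (natDegree_linearPoly_le _)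
    (natDegree_linearPoly_le _) (natDegree_le_iff_degree_le.2 hf) hvanish
  refine ⟨c, ?_, hc⟩
  rintro rfl
  rw [C_0, zero_mul, sub_zero] at hc
  refine hab (linearPoly_eq_zero_iff.1 (eq_zero_of_dvd_of_natDegree_lt
    (hcop.dvd_of_dvd_mul_right hc) ?_))
  have := natDegree_linearPoly_le ab
  omega

theorem hasPartner_of_dvd (hi₁ : Irreducible p₁) (hd₁ : p₁.natDegree = 2) (hm₂ : p₂.Monic)
    (hi₂ : Irreducible p₂) (hd₂ : p₂.natDegree = 2)
    (hcop : IsCoprime p₁ p₂) {ab : F × F} {c : F} (hc : c ≠ 0)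
    (h : p₁ ∣ linearPoly ab * p₂ - C c * (X ^ Fintype.card F - X)) : HasPartner p₁ p₂ ab := by
  have not_dvd : ∀ {p : F[X]}, Irreducible p → p.natDegree = 2 →
      ¬p ∣ C c * (X ^ Fintype.card F - X) := fun hi hd hdvd =>
    not_dvd_X_pow_card_sub_X hi (by omega) ((isUnit_C.2 hc.isUnit).dvd_mul_left.1 hdvd)
  obtain ⟨u₂, hu₂, h₂⟩ := hm₂.exists_natDegree_lt_dvd_mul_sub (by rintro rfl; simp at hd₂)
    hcop.symm (-(C c * (X ^ Fintype.card F - X)))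
  obtain ⟨ab₂, rfl⟩ := exists_linearPoly_eq (show u₂.natDegree ≤ 1 by omega)
  obtain ⟨f, hf, hvanish⟩ := exists_eval_eq_zero_of_dvd hd₁ hd₂ hcop
    (natDegree_linearPoly_le ab) (natDegree_linearPoly_le ab₂) c
    (by convert dvd_sub h (dvd_mul_left p₁ (linearPoly ab₂)) using 1; ring)
    (by convert dvd_sub (dvd_mul_left p₂ (linearPoly ab)) h₂ using 1; ring)
  refine ⟨?_, ab₂.1, ab₂.2, ?_, f, natDegree_le_iff_degree_le.1 hf, fun x => ?_⟩
  · intro hab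
    rw [Prod.mk_zero_zero, ← linearPoly_eq_zero_iff] at hab
    exact not_dvd hi₁ hd₁ (by simpa [hab] using h)
  · intro hab
    rw [Prod.mk_zero_zero, ← linearPoly_eq_zero_iff] at hab
    exact not_dvd hi₂ hd₂ (by simpa [hab] using h₂)
  · simpa using (div_eq_div_add_iff_eval_eq_zero
      (eval_ne_zero_of_irreducible_of_natDegree_ne_one hi₁ (by omega) x)
      (eval_ne_zero_of_irreducible_of_natDegree_ne_one hi₂ (by omega) x)).2 (hvanish x)

theorem exists_forall_hasPartner_iff (hq : 4 ≤ Fintype.card F) (hm₁ : p₁.Monic)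
    (hi₁ : Irreducible p₁) (hd₁ : p₁.natDegree = 2) (hm₂ : p₂.Monic) (hi₂ : Irreducible p₂)
    (hd₂ : p₂.natDegree = 2) (hne : p₁ ≠ p₂) :
    ∃ w : F × F, w ≠ 0 ∧ ∀ ab, HasPartner p₁ p₂ ab ↔ ∃ c : F, c ≠ 0 ∧ ab = c • w := by
  have hcop := hm₁.isCoprime_of_irreducible_of_ne hm₂ hi₁ hi₂ hne
  obtain ⟨u, hu, hw⟩ := hm₁.exists_natDegree_lt_dvd_mul_sub (by rintro rfl; simp at hd₁) hcop
    (X ^ Fintype.card F - X)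
  obtain ⟨w, rfl⟩ := exists_linearPoly_eq (show u.natDegree ≤ 1 by omega)
  have hdeg : ∀ ab : F × F, (linearPoly ab).natDegree < p₁.natDegree := fun ab => by
    have := natDegree_linearPoly_le ab
    omega
  have hdvd_iff : ∀ ab c,
      p₁ ∣ linearPoly ab * p₂ - C c * (X ^ Fintype.card F - X) ↔ ab = c • w := by
    have hsmul : ∀ c, p₁ ∣ linearPoly (c • w) * p₂ - C c * (X ^ Fintype.card F - X) := fun c => by
      convert dvd_mul_of_dvd_right hw (C c) using 1
      rw [linearPoly_smul]
      ring
    refine fun ab c => ⟨fun h => linearPoly_injective ?_, fun h => h ▸ hsmul c⟩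
    exact eq_of_dvd_mul_sub_of_natDegree_lt hcop (hdeg _) (hdeg _) h (hsmul c)
  refine ⟨w, fun hw0 => ?_, fun ab => ⟨fun h => ?_, fun ⟨c, hc, hab⟩ => ?_⟩⟩
  · rw [← linearPoly_eq_zero_iff] at hw0
    rw [hw0, zero_mul, zero_sub, dvd_neg] at hw
    exact not_dvd_X_pow_card_sub_X hi₁ (by omega) hw
  · obtain ⟨c, hc, hdvd⟩ := h.exists_dvd hq hi₁ hd₁ hi₂ hd₂ hcop
    exact ⟨c, hc, (hdvd_iff ab c).1 hdvd⟩
  · exact hasPartner_of_dvd hi₁ hd₁ hm₂ hi₂ hd₂ hcop hc ((hdvd_iff ab c).2 hab)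

end PartialFractions

theorem stmt10_general {F : Type*} [Field F] [Fintype F]
    (hq : 5 ≤ Fintype.card F)
    (p1 p2 : F[X])
    (hp1 : p1.Monic ∧ Irreducible p1 ∧ p1.natDegree = 2)
    (hp2 : p2.Monic ∧ Irreducible p2 ∧ p2.natDegree = 2)
    (hne : p1 ≠ p2) :
    Nat.card {ab : F × F // ab ≠ (0, 0) ∧ ∃ a2 b2 : F, (a2, b2) ≠ (0, 0) ∧
        ∃ f : F[X], f.degree ≤ ((Fintype.card F - 4 : ℕ) : WithBot ℕ) ∧
          ∀ x : F, (ab.1 + ab.2 * x) / p1.eval x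
            = (a2 + b2 * x) / p2.eval x + f.eval x}
      = Fintype.card F - 1 := by
  obtain ⟨hm1, hi1, hd1⟩ := hp1
  obtain ⟨hm2, hi2, hd2⟩ := hp2
  obtain ⟨w, hw, hpartner⟩ :=
    exists_forall_hasPartner_iff (by omega) hm1 hi1 hd1 hm2 hi2 hd2 hne
  change Nat.card {ab // HasPartner p1 p2 ab} = _
  rw [Nat.card_congr (Equiv.subtypeEquivRight hpartner), Nat.card_subtype_exists_smul_eq hw,
    Nat.card_eq_fintype_card]

/-- For odd `q ≥ 5` and distinct monic irreducible quadratics `p₁ ≠ p₂`, the set of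
nonzero pairs `(a₁,b₁)` for which `(a₁+b₁x)/p₁(x)` agrees on `F_q` with
`(a₂+b₂x)/p₂(x) + f(x)` for some nonzero `(a₂,b₂)` and some `f` of degree at most
`q - 4` has exactly `q - 1` elements. -/
theorem stmt10 {F : Type*} [Field F] [Fintype F] [DecidableEq F]
    (hq : 5 ≤ Fintype.card F) (hodd : Odd (Fintype.card F))
    (p1 p2 : F[X])
    (hp1 : p1.Monic ∧ Irreducible p1 ∧ p1.natDegree = 2)
    (hp2 : p2.Monic ∧ Irreducible p2 ∧ p2.natDegree = 2)
    (hne : p1 ≠ p2) :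
    Nat.card {ab : F × F // ab ≠ (0, 0) ∧ ∃ a2 b2 : F, (a2, b2) ≠ (0, 0) ∧
        ∃ f : F[X], f.degree ≤ ((Fintype.card F - 4 : ℕ) : WithBot ℕ) ∧
          ∀ x : F, (ab.1 + ab.2 * x) / p1.eval x
            = (a2 + b2 * x) / p2.eval x + f.eval x}
      = Fintype.card F - 1 :=
  stmt10_general hq p1 p2 hp1 hp2 hne
end

section
/- Let q ≥ 5 be a prime power. For every monic irreducible quadratic polynomial Q(x) ∈ F_q[x] and every pair (d,e) ∈ F_q²∖{(0,0)}, there exist a monic irreducible cubic polynomial p(x) ∈ F_q[x], a triple (a,b,c) ∈ F_q³∖{(0,0,0)}, and a polynomial f ∈ F_q[x] of degree at most q−5 such that (a+bx+cx²)/p(x) = (d+ex)/Q(x) + f(x) for all x ∈ F_q. -/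
/-!
Put `s = d + e X` and `w = X ^ q - X`, which vanishes on `F`. As `Q ∤ w`, there is `r ≠ 0` of
degree `≤ 1` with `s r ≡ w [mod Q]`, and for suitable `l ≠ 0` and `t` the cubic
`p = Q (X + t) + l r` has no root in `F`, so it is irreducible, and `s p ≡ l w [mod Q]`.
Taking `N` of degree `≤ 2` with `N Q ≡ -l w [mod p]`, the polynomial `N Q - s p + l w` of degree
`≤ q` is divisible by `p Q`, say equal to `p Q f`; evaluating on `F`, where `w = 0`, gives
`N / p = s / Q + f`.
-/

open Polynomial

namespace Polynomial

section CommRing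

variable {R : Type*} [CommRing R]

theorem exists_degree_lt_dvd_mul_sub [Nontrivial R] {a b : R[X]} (ha : a.Monic)
    (hab : IsCoprime a b) (c : R[X]) : ∃ r, r.degree < a.degree ∧ a ∣ b * r - c := by
  obtain ⟨u, v, huv⟩ := hab
  refine ⟨c * v %ₘ a, degree_modByMonic_lt _ ha, -(c * u) - b * (c * v /ₘ a), ?_⟩
  linear_combination b * modByMonic_add_div (c * v) a + c * huv

theorem degree_le_of_mul_eq_add [NoZeroDivisors R] {a f g w : R[X]} {n : ℕ}
    (hg : g.degree < a.degree) (hw : w.degree ≤ n) (h : a * f = g + w) :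
    f.degree ≤ ↑(n - a.natDegree) := by
  rcases eq_or_ne f 0 with rfl | hf
  · simp
  have ha : a ≠ 0 := ne_zero_of_degree_gt hg
  have hgaf : g.degree < (a * f).degree := hg.trans_le (degree_le_mul_left a hf)
  have haf : (a * f).degree ≤ n := by
    rw [h] at hgaf ⊢
    rcases lt_or_ge g.degree w.degree with hgw | hwg
    · rwa [degree_add_eq_right_of_degree_lt hgw]
    · exact absurd ((degree_add_le g w).trans (max_le le_rfl hwg)) hgaf.not_ge
  have hnat : a.natDegree + f.natDegree ≤ n :=
    natDegree_mul ha hf ▸ natDegree_le_of_degree_le haf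
  exact degree_le_natDegree.trans (by exact_mod_cast (by omega : f.natDegree ≤ n - a.natDegree))

theorem eval_eq_of_natDegree_lt_three {N : R[X]} (h : N.natDegree < 3) (x : R) :
    N.eval x = N.coeff 0 + N.coeff 1 * x + N.coeff 2 * x ^ 2 := by
  simp [eval_eq_sum_range' h, Finset.sum_range_succ]

theorem coeffs_ne_zero_of_natDegree_lt_three {N : R[X]} (hN : N ≠ 0) (h : N.natDegree < 3) :
    (N.coeff 0, N.coeff 1, N.coeff 2) ≠ (0, 0, 0) := by
  intro hc
  simp only [Prod.mk.injEq] at hc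
  refine hN (ext fun n => ?_)
  rcases lt_or_ge n 3 with hn | hn
  · interval_cases n <;> simp [hc]
  · exact coeff_eq_zero_of_natDegree_lt (by omega)

end CommRing

theorem _root_.Irreducible.isCoprime_of_degree_lt {K : Type*} [Field K] {a b : K[X]}
    (ha : Irreducible a) (hb : b ≠ 0) (h : b.degree < a.degree) : IsCoprime a b :=
  ha.coprime_iff_not_dvd.2 fun hd => (degree_le_of_dvd hd hb).not_gt h

end Polynomial

namespace FiniteField

variable {F : Type*} [Field F] [Fintype F]

theorem eval_X_pow_card_sub_X (x : F) : (X ^ Fintype.card F - X : F[X]).eval x = 0 := by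
  simp [pow_card]

theorem splits_X_pow_card_sub_X_self : (X ^ Fintype.card F - X : F[X]).Splits := by
  rw [splits_iff_card_roots, roots_X_pow_card_sub_X,
    X_pow_card_sub_X_natDegree_eq F Fintype.one_lt_card]
  rfl

theorem _root_.Irreducible.not_dvd_X_pow_card_sub_X {h : F[X]} (hh : Irreducible h)
    (hdeg : h.natDegree ≠ 1) : ¬h ∣ X ^ Fintype.card F - X := fun hdvd =>
  hdeg <| (splits_X_pow_card_sub_X_self.of_dvd
    (X_pow_card_sub_X_ne_zero F Fintype.one_lt_card) hdvd).natDegree_eq_one_of_irreducible hh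

theorem exists_eval_div_ne_eval_div {r Q : F[X]} (hr : r ≠ 0) (hrQ : r.degree < Q.degree)
    (hQF : Q.natDegree < Fintype.card F) (hQ0 : ∀ x, Q.eval x ≠ 0) :
    ∃ β γ : F, r.eval β / Q.eval β ≠ r.eval γ / Q.eval γ := by
  by_contra! hconst
  set c := r.eval 0 / Q.eval 0
  have hrc : r = C c * Q := by
    refine eq_of_natDegree_lt_card_of_eval_eq r (C c * Q) Function.injective_id (fun x => ?_) ?_
    · simp only [id, eval_mul, eval_C, c, ← hconst x 0, div_mul_cancel₀ _ (hQ0 x)]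
    · exact max_lt ((natDegree_le_natDegree hrQ.le).trans_lt hQF)
        (natDegree_C_mul_le c Q |>.trans_lt hQF)
  rcases eq_or_ne c 0 with hc | hc
  · exact hr (by simp [hrc, hc])
  · rw [hrc, degree_C_mul hc] at hrQ
    exact lt_irrefl _ hrQ

/-- `Q * (X + t) + l * r` vanishes at `x` iff `m x = t` for `m x = -x - l * r x / Q x`; `l` is
chosen so that `m β = m γ`, so `m` is not surjective. -/
theorem exists_forall_eval_mul_X_add_C_add_C_mul_ne_zero {Q r : F[X]} (hQ0 : ∀ x, Q.eval x ≠ 0)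
    {β γ : F} (hβγ : r.eval β / Q.eval β ≠ r.eval γ / Q.eval γ) :
    ∃ l t : F, l ≠ 0 ∧ ∀ x, (Q * (X + C t) + C l * r).eval x ≠ 0 := by
  have hne : β ≠ γ := by rintro rfl; exact hβγ rfl
  set l := (β - γ) / (r.eval γ / Q.eval γ - r.eval β / Q.eval β)
  have hl : l ≠ 0 := div_ne_zero (sub_ne_zero.2 hne) (sub_ne_zero.2 hβγ.symm)
  set m : F → F := fun x => -x - l * (r.eval x / Q.eval x)
  have hm : m β = m γ := by
    have : l * (r.eval γ / Q.eval γ - r.eval β / Q.eval β) = β - γ :=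
      div_mul_cancel₀ _ (sub_ne_zero.2 hβγ.symm)
    simp only [m]
    linear_combination this
  obtain ⟨t, ht⟩ : ∃ t, ∀ x, m x ≠ t := by
    by_contra! hsurj
    exact hne (Finite.injective_iff_surjective.2 hsurj hm)
  refine ⟨l, t, hl, fun x hx => ht x ?_⟩
  have hQx := hQ0 x
  simp only [eval_add, eval_mul, eval_X, eval_C] at hx
  simp only [m]
  field_simp
  linear_combination -hx

theorem exists_monic_irreducible_cubic_dvd_sub {Q r : F[X]} (hQm : Q.Monic)
    (hQirr : Irreducible Q) (hQdeg : Q.natDegree = 2) (hr : r ≠ 0) (hrQ : r.degree < Q.degree)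
    (hF : 2 < Fintype.card F) :
    ∃ (p : F[X]) (l : F), p.Monic ∧ Irreducible p ∧ p.natDegree = 3 ∧ l ≠ 0 ∧
      Q ∣ p - C l * r := by
  have hQ0 (x : F) : Q.eval x ≠ 0 := hQirr.not_isRoot_of_natDegree_ne_one (by omega)
  obtain ⟨β, γ, hβγ⟩ := exists_eval_div_ne_eval_div hr hrQ (by omega) hQ0
  obtain ⟨l, t, hl, hp0⟩ := exists_forall_eval_mul_X_add_C_add_C_mul_ne_zero hQ0 hβγ
  have hlt : (C l * r).degree < (Q * (X + C t)).degree := by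
    rw [degree_C_mul hl]
    exact hrQ.trans_le (degree_le_mul_left Q (X_add_C_ne_zero t))
  have hdeg : (Q * (X + C t) + C l * r).natDegree = 3 := by
    rw [natDegree_add_eq_left_of_degree_lt hlt, natDegree_mul hQm.ne_zero (X_add_C_ne_zero t),
      hQdeg, natDegree_X_add_C]
  have hpm := (hQm.mul (monic_X_add_C t)).add_of_left hlt
  refine ⟨_, l, hpm, ?_, hdeg, hl, ⟨X + C t, by ring⟩⟩
  refine (irreducible_iff_roots_eq_zero_of_degree_le_three (by omega) (by omega)).2 ?_
  exact Multiset.eq_zero_of_forall_notMem fun x hx => hp0 x (isRoot_of_mem_roots hx)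

theorem exists_eval_div_eq_eval_div_add_eval {p Q s : F[X]} {l : F} (hp : p.Monic)
    (hpQ : IsCoprime p Q) (hs : s.degree < Q.degree)
    (hQ : Q ∣ C l * (X ^ Fintype.card F - X) - s * p)
    (hpw : ¬p ∣ C l * (X ^ Fintype.card F - X)) (hp0 : ∀ x, p.eval x ≠ 0)
    (hQ0 : ∀ x, Q.eval x ≠ 0) :
    ∃ N f : F[X], N ≠ 0 ∧ N.degree < p.degree ∧
      f.degree ≤ ↑(Fintype.card F - (p * Q).natDegree) ∧
      ∀ x, N.eval x / p.eval x = s.eval x / Q.eval x + f.eval x := by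
  set w : F[X] := C l * (X ^ Fintype.card F - X)
  have hQne : Q ≠ 0 := ne_zero_of_degree_gt hs
  obtain ⟨N, hN, hpN⟩ := exists_degree_lt_dvd_mul_sub hp hpQ (-w)
  obtain ⟨f, hf⟩ : p * Q ∣ N * Q - s * p + w := by
    refine hpQ.mul_dvd ?_ ?_
    · convert hpN.sub (dvd_mul_left p s) using 1; ring
    · convert (dvd_mul_left Q N).add hQ using 1; ring
  have hN0 : N ≠ 0 := by
    rintro rfl
    exact hpw (by simpa using hpN)
  have hlow : (N * Q - s * p).degree < (p * Q).degree := by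
    refine (degree_sub_le _ _).trans_lt (max_lt ?_ ?_)
    · rw [degree_mul, degree_mul]
      exact WithBot.add_lt_add_right (degree_ne_bot.2 hQne) hN
    · rw [degree_mul, degree_mul, add_comm p.degree]
      exact WithBot.add_lt_add_right (degree_ne_bot.2 hp.ne_zero) hs
  have hw : w.degree ≤ Fintype.card F := by
    rw [show w = l • (X ^ Fintype.card F - X) from (smul_eq_C_mul l).symm]
    refine (degree_smul_le _ _).trans (degree_le_natDegree.trans ?_)
    rw [X_pow_card_sub_X_natDegree_eq F Fintype.one_lt_card]
  refine ⟨N, f, hN0, hN, degree_le_of_mul_eq_add hlow hw hf.symm, fun x => ?_⟩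
  have hx := congrArg (eval x) hf
  have hwx : w.eval x = 0 := by rw [eval_mul, eval_X_pow_card_sub_X, mul_zero]
  simp only [eval_add, eval_sub, eval_mul, hwx, add_zero] at hx
  have hpx := hp0 x
  have hQx := hQ0 x
  field_simp
  linear_combination hx

end FiniteField

theorem stmt18_general {F : Type*} [Field F] [Fintype F]
    (hq : 5 ≤ Fintype.card F)
    (Q : F[X]) (hQ : Q.Monic ∧ Irreducible Q ∧ Q.natDegree = 2)
    (d e : F) (hde : (d, e) ≠ (0, 0)) :
    ∃ p : F[X], p.Monic ∧ Irreducible p ∧ p.natDegree = 3 ∧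
      ∃ a b c : F, (a, b, c) ≠ (0, 0, 0) ∧
        ∃ f : F[X], f.degree ≤ ((Fintype.card F - 5 : ℕ) : WithBot ℕ) ∧
          ∀ x : F, (a + b * x + c * x ^ 2) / p.eval x
            = (d + e * x) / Q.eval x + f.eval x := by
  obtain ⟨hQm, hQirr, hQdeg⟩ := hQ
  set s : F[X] := C e * X + C d
  have hs0 : s ≠ 0 := fun h =>
    hde (by simpa [s] using congrArg (fun P => (P.coeff 0, P.coeff 1)) h)
  have hsQ : s.degree < Q.degree :=
    degree_linear_le.trans_lt (by rw [degree_eq_natDegree hQm.ne_zero, hQdeg]; decide)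
  obtain ⟨r, hrQ, hQr⟩ := exists_degree_lt_dvd_mul_sub hQm (hQirr.isCoprime_of_degree_lt hs0 hsQ)
    (X ^ Fintype.card F - X)
  have hr0 : r ≠ 0 := by
    rintro rfl
    exact hQirr.not_dvd_X_pow_card_sub_X (by omega) (by simpa using hQr.neg_right)
  obtain ⟨p, l, hpm, hpirr, hpdeg, hl, hQp⟩ :=
    FiniteField.exists_monic_irreducible_cubic_dvd_sub hQm hQirr hQdeg hr0 hrQ (by omega)
  have hQw : Q ∣ C l * (X ^ Fintype.card F - X) - s * p := by
    convert (hQr.mul_left (-C l)).sub (hQp.mul_left s) using 1; ring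
  have hpw : ¬p ∣ C l * (X ^ Fintype.card F - X) := by
    rw [(isUnit_C.2 hl.isUnit).dvd_mul_left]
    exact hpirr.not_dvd_X_pow_card_sub_X (by omega)
  have hpQ : IsCoprime p Q := hpirr.isCoprime_of_degree_lt hQm.ne_zero
    (by rw [degree_eq_natDegree hQm.ne_zero, degree_eq_natDegree hpm.ne_zero, hQdeg, hpdeg]; decide)
  obtain ⟨N, f, hN0, hN, hf, hNf⟩ :=
    FiniteField.exists_eval_div_eq_eval_div_add_eval hpm hpQ hsQ hQw hpw
    (fun x => hpirr.not_isRoot_of_natDegree_ne_one (by omega))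
    (fun x => hQirr.not_isRoot_of_natDegree_ne_one (by omega))
  have hN3 : N.natDegree < 3 := hpdeg ▸ natDegree_lt_natDegree hN0 hN
  refine ⟨p, hpm, hpirr, hpdeg, _, _, _, coeffs_ne_zero_of_natDegree_lt_three hN0 hN3, f,
    by rwa [natDegree_mul hpm.ne_zero hQm.ne_zero, hpdeg, hQdeg] at hf, fun x => ?_⟩
  rw [← eval_eq_of_natDegree_lt_three hN3, hNf]
  simp [s, add_comm]

/-- For `q ≥ 5`, every rational function `(d+ex)/Q(x)` with `Q` a monic irreducible
quadratic and `(d,e) ≠ (0,0)` agrees on `F_q` with `(a+bx+cx²)/p(x) + f(x)` for some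
monic irreducible cubic `p`, some nonzero triple `(a,b,c)`, and some `f` of degree
at most `q - 5`. -/
theorem stmt18 {F : Type*} [Field F] [Fintype F] [DecidableEq F]
    (hq : 5 ≤ Fintype.card F)
    (Q : F[X]) (hQ : Q.Monic ∧ Irreducible Q ∧ Q.natDegree = 2)
    (d e : F) (hde : (d, e) ≠ (0, 0)) :
    ∃ p : F[X], p.Monic ∧ Irreducible p ∧ p.natDegree = 3 ∧
      ∃ a b c : F, (a, b, c) ≠ (0, 0, 0) ∧
        ∃ f : F[X], f.degree ≤ ((Fintype.card F - 5 : ℕ) : WithBot ℕ) ∧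
          ∀ x : F, (a + b * x + c * x ^ 2) / p.eval x
            = (d + e * x) / Q.eval x + f.eval x :=
  stmt18_general hq Q hQ d e hde
end
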